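/- arXiv:1212.5358 — 14 statements merged into one kernel-verified Lean document; each statement's English description precedes it below -/
import Mathlib

section
/- Let S be a semiring and A ∈ S^{m×n}. Then the map S^{n×1}/ker(row(A)) → col(A) induced by v ↦ Av is an isomorphism of right S-modules, where ker(row(A)) = {(v,v') : xv = xv' for all x ∈ row(A)}. -/
open Matrix

def rowSpace {S : Type*} [Semiring S] {m n : ℕ} (A : Matrix (Fin m) (Fin n) S) :
    Set (Fin n → S) := {x | ∃ u : Fin m → S, x = Matrix.vecMul u A}

def colSpace {S : Type*} [Semiring S] {m n : ℕ} (A : Matrix (Fin m) (Fin n) S) :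
    Set (Fin m → S) := {y | ∃ v : Fin n → S, y = Matrix.mulVec A v}

/-- The kernel of the row space of `A`, as a setoid (right congruence) on column vectors. -/
def kerSetoid {S : Type*} [Semiring S] {m n : ℕ} (A : Matrix (Fin m) (Fin n) S) :
    Setoid (Fin n → S) where
  r v w := ∀ x ∈ rowSpace A, dotProduct x v = dotProduct x w
  iseqv := ⟨fun _ _ _ => rfl, fun h x hx => (h x hx).symm,
    fun h1 h2 x hx => (h1 x hx).trans (h2 x hx)⟩

/-- `S^{n×1} / ker(row(A)) ≅ col(A)` as right `S`-modules, via the map induced by `v ↦ Av`: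
there is a bijection sending the class of `v` to `A *ᵥ v`, which is additive and compatible
with the right scalar action of `S`. -/
theorem quotient_ker_rowSpace_equiv_colSpace {S : Type*} [Semiring S] {m n : ℕ}
    (A : Matrix (Fin m) (Fin n) S) :
    ∃ e : Quotient (kerSetoid A) ≃ {y : Fin m → S // y ∈ colSpace A},
      (∀ v : Fin n → S, ((e (Quotient.mk (kerSetoid A) v)) : Fin m → S) = Matrix.mulVec A v) ∧
      (∀ v w : Fin n → S,
        ((e (Quotient.mk (kerSetoid A) (v + w))) : Fin m → S)
          = (e (Quotient.mk (kerSetoid A) v) : Fin m → S)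
            + (e (Quotient.mk (kerSetoid A) w) : Fin m → S)) ∧
      (∀ (v : Fin n → S) (a : S),
        ((e (Quotient.mk (kerSetoid A) (fun i => v i * a))) : Fin m → S)
          = fun i => (e (Quotient.mk (kerSetoid A) v) : Fin m → S) i * a) := by
  classical
  have key : ∀ v w : Fin n → S, (kerSetoid A).r v w ↔ A *ᵥ v = A *ᵥ w := by
    intro v w
    constructor
    · intro h
      funext i
      have := h (Matrix.vecMul (Pi.single i 1) A) ⟨Pi.single i 1, rfl⟩
      simp [← Matrix.dotProduct_mulVec, single_dotProduct] at this; exact this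
    · intro h x hx
      obtain ⟨u, rfl⟩ := hx
      rw [← Matrix.dotProduct_mulVec, ← Matrix.dotProduct_mulVec, h]
  let f : Quotient (kerSetoid A) → {y : Fin m → S // y ∈ colSpace A} :=
    Quotient.lift (fun v => ⟨A *ᵥ v, v, rfl⟩)
      (fun v w h => Subtype.ext ((key v w).mp h))
  have hbij : Function.Bijective f := by
    constructor
    · intro x y
      induction x using Quotient.ind
      induction y using Quotient.ind
      intro h
      exact Quotient.sound <| (key _ _).mpr (congrArg Subtype.val h)
    · rintro ⟨y, v, rfl⟩
      exact ⟨Quotient.mk _ v, rfl⟩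
  refine ⟨Equiv.ofBijective f hbij, fun v => rfl, fun v w => ?_, fun v a => ?_⟩
  · show (A *ᵥ (v + w) : Fin m → S) = A *ᵥ v + A *ᵥ w
    rw [Matrix.mulVec_add]
  · show (A *ᵥ (fun i => v i * a) : Fin m → S) = fun i => (A *ᵥ v) i * a
    funext i
    simp only [Matrix.mulVec, dotProduct, Finset.sum_mul, mul_assoc]
end

section
/- Let S be a semiring. Then the following are equivalent for all matrices A over S: (E1) for every x ∈ S^{1×n} \ row(A) there exist column vectors v, v' with Av = Av' but xv ≠ xv'; and (F1) for every matrix B ∈ S^{p×n}, if ker(row(A)) ⊆ ker(row(B)) then row(B) ⊆ row(A). -/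
open Matrix

def rowKer {S : Type*} [Semiring S] {n : ℕ} (X : Set (Fin n → S)) :
    Set ((Fin n → S) × (Fin n → S)) :=
  {q | ∀ x ∈ X, dotProduct x q.1 = dotProduct x q.2}

lemma mem_rowKer_iff {S : Type*} [Semiring S] {m n : ℕ} (A : Matrix (Fin m) (Fin n) S)
    (v v' : Fin n → S) :
    (v, v') ∈ rowKer (rowSpace A) ↔ Matrix.mulVec A v = Matrix.mulVec A v' := by
  constructor
  · intro h
    funext i
    have := h (A i) ⟨Pi.single i 1, by rw [Matrix.single_one_vecMul]; rfl⟩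
    simpa [Matrix.mulVec, dotProduct] using this
  · intro h x hx
    obtain ⟨u, rfl⟩ := hx
    simp only [← dotProduct_mulVec, h]

/-- (E1) holds for all matrices over `S` iff (F1) holds for all matrices over `S`. -/
theorem E1_iff_F1 {S : Type*} [Semiring S] :
    (∀ (m n : ℕ) (A : Matrix (Fin m) (Fin n) S) (x : Fin n → S), x ∉ rowSpace A →
      ∃ v v' : Fin n → S, Matrix.mulVec A v = Matrix.mulVec A v' ∧
        dotProduct x v ≠ dotProduct x v') ↔
    (∀ (m n p : ℕ) (A : Matrix (Fin m) (Fin n) S) (B : Matrix (Fin p) (Fin n) S),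
      rowKer (rowSpace A) ⊆ rowKer (rowSpace B) → rowSpace B ⊆ rowSpace A) := by
  constructor
  · intro hE m n p A B hker x hxB
    by_contra hxA
    obtain ⟨v, v', hAv, hne⟩ := hE m n A x hxA
    have hmem : (v, v') ∈ rowKer (rowSpace A) := (mem_rowKer_iff A v v').mpr hAv
    exact hne (hker hmem x hxB)
  · intro hF m n A x hxA
    set B : Matrix (Fin 1) (Fin n) S := Matrix.of fun _ j => x j with hB
    have hxB : x ∈ rowSpace B := ⟨fun _ => 1, by
      funext j
      simp [Matrix.vecMul, dotProduct, hB]⟩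
    have hnsub : ¬ rowSpace B ⊆ rowSpace A := fun h => hxA (h hxB)
    have hnker : ¬ rowKer (rowSpace A) ⊆ rowKer (rowSpace B) := fun h => hnsub (hF m n 1 A B h)
    rw [Set.not_subset] at hnker
    obtain ⟨⟨v, v'⟩, hvA, hvB⟩ := hnker
    refine ⟨v, v', (mem_rowKer_iff A v v').mp hvA, ?_⟩
    intro hxe
    apply hvB
    rintro y ⟨u, rfl⟩
    simp only [Matrix.vecMul, dotProduct, hB]
    simp only [Fin.sum_univ_one, Matrix.of_apply]
    simp only [dotProduct, Finset.mul_sum, ← mul_assoc] at hxe ⊢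
    calc ∑ j, u 0 * x j * v j = u 0 * ∑ j, x j * v j := by rw [Finset.mul_sum]; simp [mul_assoc]
      _ = u 0 * ∑ j, x j * v' j := by rw [hxe]
      _ = ∑ j, u 0 * x j * v' j := by rw [Finset.mul_sum]; simp [mul_assoc]
end

section
/- Let S be a semiring and A ∈ S^{m×n}. The map row(A) → col(A)* sending x to the function Av ↦ xv is a well-defined injective homomorphism of left S-modules, where col(A)* denotes the left S-module of right S-linear functions col(A) → S. -/
open Matrix

/-- The map `row(A) → col(A)*`, `x ↦ (Av ↦ xv)`, is a well-defined injective homomorphism of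
left `S`-modules: for `x ∈ row(A)` the assignment `Av ↦ x ⬝ᵥ v` is well defined; the
(outer) map `x ↦ (Av ↦ xv)` is injective; and it is left linear. -/
theorem rowSpace_to_colSpace_dual {S : Type*} [Semiring S] {m n : ℕ}
    (A : Matrix (Fin m) (Fin n) S) :
    (∀ x ∈ rowSpace A, ∀ v v' : Fin n → S,
        Matrix.mulVec A v = Matrix.mulVec A v' →
        dotProduct x v = dotProduct x v') ∧
    (∀ x ∈ rowSpace A, ∀ x' ∈ rowSpace A,
        (∀ v : Fin n → S, dotProduct x v = dotProduct x' v) → x = x') ∧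
    (∀ (a b : S) (x x' : Fin n → S) (v : Fin n → S),
        dotProduct (a • x + b • x') v
          = a * dotProduct x v + b * dotProduct x' v) := by
  refine ⟨?_, ?_, ?_⟩
  · rintro x ⟨u, rfl⟩ v v' h
    rw [← Matrix.dotProduct_mulVec, ← Matrix.dotProduct_mulVec, h]
  · intro x _ x' _ h
    funext i
    simpa using h (Pi.single i 1)
  · intro a b x x' v
    simp [add_dotProduct, smul_dotProduct, smul_eq_mul]
end

section
/- Let S be a semiring satisfying property (E1) for all matrices: for every A ∈ S^{m×n} and every x ∈ S^{1×n} not in row(A), there exist v, v' ∈ S^{n×1} with Av = Av' but xv ≠ xv'. Then for every matrix A, every right S-linear function φ : col(A) → S equals Av ↦ xv for some x ∈ row(A); that is, the canonical embedding row(A) → col(A)* is surjective. -/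
open Matrix

/-- `φ : col(A) → S` is right `S`-linear. -/
def RightLin {S : Type*} [Semiring S] {m n : ℕ} (A : Matrix (Fin m) (Fin n) S)
    (φ : {y : Fin m → S // y ∈ colSpace A} → S) : Prop :=
  (∀ (y y' : Fin m → S) (hy : y ∈ colSpace A) (hy' : y' ∈ colSpace A)
      (h : y + y' ∈ colSpace A), φ ⟨y + y', h⟩ = φ ⟨y, hy⟩ + φ ⟨y', hy'⟩) ∧
  (∀ (y : Fin m → S) (hy : y ∈ colSpace A) (a : S)
      (h : (fun i => y i * a) ∈ colSpace A), φ ⟨fun i => y i * a, h⟩ = φ ⟨y, hy⟩ * a)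

/-- If (E1) holds for all matrices over `S`, then for every matrix `A` every right linear
function `φ : col(A) → S` is of the form `Av ↦ xv` for some `x ∈ row(A)`; that is, the
canonical embedding `row(A) → col(A)*` is surjective. -/
theorem embedding_surjective_of_E1 {S : Type*} [Semiring S]
    (hE1 : ∀ (m n : ℕ) (A : Matrix (Fin m) (Fin n) S) (x : Fin n → S), x ∉ rowSpace A →
      ∃ v v' : Fin n → S, Matrix.mulVec A v = Matrix.mulVec A v' ∧
        dotProduct x v ≠ dotProduct x v') :
    ∀ (m n : ℕ) (A : Matrix (Fin m) (Fin n) S)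
      (φ : {y : Fin m → S // y ∈ colSpace A} → S), RightLin A φ →
      ∃ x ∈ rowSpace A, ∀ v : Fin n → S,
        φ ⟨Matrix.mulVec A v, ⟨v, rfl⟩⟩ = dotProduct x v := by
  intro m n A φ hRL
  obtain ⟨hadd, hscal⟩ := hRL
  -- congruence helper
  have φcongr : ∀ (y y' : Fin m → S) (hy : y ∈ colSpace A) (hy' : y' ∈ colSpace A),
      y = y' → φ ⟨y, hy⟩ = φ ⟨y', hy'⟩ := by
    rintro y _ hy _ rfl; rfl
  set x : Fin n → S := fun j => φ ⟨Matrix.mulVec A (Pi.single j 1), ⟨_, rfl⟩⟩ with hxdef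
  -- φ vanishes on zero
  have hzero : φ ⟨Matrix.mulVec A 0, ⟨0, rfl⟩⟩ = 0 := by
    have h0 : (fun i => (Matrix.mulVec A 0) i * 0) ∈ colSpace A := ⟨0, by funext i; simp⟩
    have := hscal (Matrix.mulVec A 0) ⟨0, rfl⟩ 0 h0
    have heq : φ ⟨Matrix.mulVec A 0, ⟨0, rfl⟩⟩ = φ ⟨fun i => (Matrix.mulVec A 0) i * 0, h0⟩ :=
      φcongr _ _ _ _ (by funext i; simp)
    rw [heq, this, mul_zero]
  -- single column evaluation
  have hsingle : ∀ (j : Fin n) (c : S),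
      Matrix.mulVec A (Pi.single j c) = fun i => (Matrix.mulVec A (Pi.single j 1)) i * c := by
    intro j c
    funext i
    simp [Matrix.mulVec, dotProduct, Pi.single_apply, mul_ite, mul_assoc,
      Finset.sum_ite_eq']
  have main : ∀ (t : Finset (Fin n)) (v : Fin n → S), (∀ j, j ∉ t → v j = 0) →
      φ ⟨Matrix.mulVec A v, ⟨v, rfl⟩⟩ = ∑ j ∈ t, x j * v j := by
    intro t
    induction t using Finset.induction with
    | empty =>
      intro v hv
      have hv0 : v = 0 := funext fun j => hv j (by simp)
      subst hv0
      simpa using hzero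
    | @insert j s hj ih =>
      intro v hv
      set v' : Fin n → S := Function.update v j 0 with hv'def
      have hsplit : v = v' + Pi.single j (v j) := by
        funext k
        by_cases hk : k = j
        · subst hk; simp [v', Function.update_self]
        · simp [v', Function.update_of_ne hk, Pi.single_apply, hk]
      have hmem1 : Matrix.mulVec A v' ∈ colSpace A := ⟨v', rfl⟩
      have hmem2 : Matrix.mulVec A (Pi.single j (v j)) ∈ colSpace A := ⟨_, rfl⟩
      have hmemsum : Matrix.mulVec A v' + Matrix.mulVec A (Pi.single j (v j)) ∈ colSpace A := by
        refine ⟨v' + Pi.single j (v j), ?_⟩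
        rw [Matrix.mulVec_add]
      have step1 : φ ⟨Matrix.mulVec A v, ⟨v, rfl⟩⟩ =
          φ ⟨Matrix.mulVec A v' + Matrix.mulVec A (Pi.single j (v j)), hmemsum⟩ :=
        φcongr _ _ _ _ (by conv_lhs => rw [hsplit, Matrix.mulVec_add])
      rw [step1, hadd _ _ hmem1 hmem2 hmemsum]
      -- scalar part
      have hm3 : (fun i => (Matrix.mulVec A (Pi.single j 1)) i * v j) ∈ colSpace A :=
        ⟨Pi.single j (v j), (hsingle j (v j)).symm⟩
      have step2 : φ ⟨Matrix.mulVec A (Pi.single j (v j)), hmem2⟩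
          = φ ⟨fun i => (Matrix.mulVec A (Pi.single j 1)) i * v j, hm3⟩ :=
        φcongr _ _ _ _ (hsingle j (v j))
      rw [step2, hscal _ ⟨Pi.single j 1, rfl⟩ (v j) hm3]
      have hvs : ∀ k, k ∉ s → v' k = 0 := by
        intro k hk
        by_cases hkj : k = j
        · subst hkj; simp [v']
        · have : k ∉ insert j s := by simp [hkj, hk]
          simp [v', Function.update_of_ne hkj, hv k this]
      rw [ih v' hvs, Finset.sum_insert hj]
      have : ∑ k ∈ s, x k * v' k = ∑ k ∈ s, x k * v k := by
        refine Finset.sum_congr rfl fun k hk => ?_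
        have hkj : k ≠ j := fun h => hj (h ▸ hk)
        simp [v', Function.update_of_ne hkj]
      rw [this, add_comm]
  have key : ∀ v : Fin n → S, φ ⟨Matrix.mulVec A v, ⟨v, rfl⟩⟩ = dotProduct x v := by
    intro v
    rw [main Finset.univ v (fun j hj => absurd (Finset.mem_univ j) hj)]
    rfl
  refine ⟨x, ?_, key⟩
  by_contra hx
  obtain ⟨v, v', hA, hne⟩ := hE1 m n A x hx
  exact hne (by rw [← key v, ← key v']; exact φcongr _ _ _ _ hA)
end

section
/- Let R be a commutative ring such that for every matrix A over R, the canonical map row(A) → col(A)* (x ↦ (Av ↦ xv)) is surjective (equivalently, R is exact). Then every nonzero element of R is either a zero divisor or a unit. Consequently an exact integral domain is a field. -/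
open Matrix

/-- In an exact commutative ring, every nonzero element is a zero divisor or a unit;
consequently an exact integral domain is a field. -/
theorem exact_comm_ring_zeroDivisor_or_unit {R : Type*} [CommRing R]
    (hexact : ∀ (m n : ℕ) (A : Matrix (Fin m) (Fin n) R)
      (φ : {y : Fin m → R // y ∈ colSpace A} → R), RightLin A φ →
      ∃ x ∈ rowSpace A, ∀ v : Fin n → R,
        φ ⟨Matrix.mulVec A v, ⟨v, rfl⟩⟩ = dotProduct x v) :
    (∀ a : R, a ≠ 0 → (∃ b : R, b ≠ 0 ∧ a * b = 0) ∨ IsUnit a) ∧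
    (IsDomain R → IsField R) := by
  have main : ∀ a : R, a ≠ 0 → (∃ b : R, b ≠ 0 ∧ a * b = 0) ∨ IsUnit a := by
    intro a ha
    by_cases hzd : ∃ b : R, b ≠ 0 ∧ a * b = 0
    · exact Or.inl hzd
    · right
      have hreg : ∀ b : R, a * b = 0 → b = 0 := by
        intro b hb
        by_contra hb0
        exact hzd ⟨b, hb0, hb⟩
      have hcancel : ∀ x y : R, a * x = a * y → x = y := by
        intro x y h
        have h2 : a * (x - y) = 0 := by rw [mul_sub, h, sub_self]
        exact sub_eq_zero.mp (hreg _ h2)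
      set A : Matrix (Fin 1) (Fin 1) R := Matrix.of fun _ _ => a with hA
      have hmv : ∀ v : Fin 1 → R, Matrix.mulVec A v 0 = a * v 0 := by
        intro v
        simp [hA, Matrix.mulVec, dotProduct, Fin.sum_univ_one]
      have hspec : ∀ (y : Fin 1 → R) (hy : y ∈ colSpace A),
          y 0 = a * Classical.choose hy 0 := by
        intro y hy
        conv_lhs => rw [Classical.choose_spec hy]
        exact hmv _
      have hval : ∀ (y : Fin 1 → R) (hy : y ∈ colSpace A) (t : R),
          y 0 = a * t → Classical.choose hy 0 = t := by
        intro y hy t ht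
        exact hcancel _ _ (by rw [← hspec y hy, ht])
      set φ : {y : Fin 1 → R // y ∈ colSpace A} → R :=
        fun p => Classical.choose p.2 0 with hφdef
      have hlin : RightLin A φ := by
        constructor
        · intro y y' hy hy' h
          exact hval _ h _ (by
            rw [Pi.add_apply, hspec y hy, hspec y' hy', mul_add])
        · intro y hy c h
          exact hval _ h _ (by
            show y 0 * c = a * (Classical.choose hy 0 * c)
            rw [hspec y hy, mul_assoc])
      obtain ⟨x, hx, hφ⟩ := hexact 1 1 A φ hlin
      obtain ⟨u, hu⟩ := hx
      have h1 := hφ (fun _ => 1)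
      have hleft : φ ⟨Matrix.mulVec A (fun _ => 1), ⟨fun _ => 1, rfl⟩⟩ = 1 := by
        exact hval _ _ _ (by show (Matrix.mulVec A fun _ => 1) 0 = a * 1; rw [hmv, mul_one])
      have hright : dotProduct x (fun _ => (1 : R)) = u 0 * a := by
        rw [hu]
        simp [hA, Matrix.vecMul, dotProduct, Fin.sum_univ_one]
      rw [hleft, hright] at h1
      exact IsUnit.of_mul_eq_one (a := a) (u 0) (by rw [mul_comm]; exact h1.symm)
  refine ⟨main, fun hdom => ⟨exists_pair_ne R, mul_comm, ?_⟩⟩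
  intro a ha
  rcases main a ha with ⟨b, hb, hab⟩ | hu
  · rcases mul_eq_zero.mp hab with h | h
    · exact absurd h ha
    · exact absurd h hb
  · exact hu.exists_right_inv
end

section
/- Let P be a principal ideal domain, r ∈ P a nonzero element, and R = P/(r). Then for every a' ∈ P with A = a' + rP ∈ R, there exists B ∈ R such that the annihilator of the ideal RA equals BR and the annihilator of BR equals RA. Explicitly, if a = gcd(a', r) and r = ba, then B = b + rP works. -/
/-- Let `P` be a PID, `r ≠ 0` and `R = P/rP`. For every `A = a' + rP ∈ R` there is `B ∈ R`
with `ann(RA) = BR` and `ann(BR) = RA`. -/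
theorem exists_annihilator_generator {P : Type*} [CommRing P] [IsDomain P]
    [IsPrincipalIdealRing P] (r : P) (hr : r ≠ 0) (a' : P) :
    ∃ B : P ⧸ Ideal.span {r},
      (∀ c : P ⧸ Ideal.span {r},
        c * Ideal.Quotient.mk (Ideal.span {r}) a' = 0 ↔ ∃ d, c = B * d) ∧
      (∀ c : P ⧸ Ideal.span {r},
        c * B = 0 ↔ ∃ d, c = d * Ideal.Quotient.mk (Ideal.span {r}) a') := by
  obtain ⟨a, ha⟩ := (IsPrincipalIdealRing.principal (Ideal.span ({a', r} : Set P)))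
  rw [Ideal.submodule_span_eq] at ha
  have ha' : a ∣ a' := by
    rw [← Ideal.mem_span_singleton, ← ha]
    exact Ideal.subset_span (by simp)
  have har : a ∣ r := by
    rw [← Ideal.mem_span_singleton, ← ha]
    exact Ideal.subset_span (by simp)
  obtain ⟨b, hb⟩ := har
  obtain ⟨a₁, ha₁⟩ := ha'
  have hamem : a ∈ Ideal.span ({a', r} : Set P) := by
    rw [ha]; exact Ideal.mem_span_singleton_self a
  obtain ⟨u, v, huv⟩ := Ideal.mem_span_pair.mp hamem
  have hane : a ≠ 0 := fun h => hr (by rw [hb, h, zero_mul])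
  have hbne : b ≠ 0 := fun h => hr (by rw [hb, h, mul_zero])
  refine ⟨Ideal.Quotient.mk _ b, ?_, ?_⟩
  · intro c
    obtain ⟨c', rfl⟩ := Ideal.Quotient.mk_surjective c
    rw [← map_mul, Ideal.Quotient.eq_zero_iff_mem, Ideal.mem_span_singleton]
    constructor
    · rintro ⟨e, he⟩
      have h1 : a * b ∣ c' * a := by
        refine ⟨u * e + v * c', ?_⟩
        calc c' * a = u * (c' * a') + v * c' * r := by rw [← huv]; ring
          _ = u * (r * e) + v * c' * r := by rw [he]
          _ = a * b * (u * e + v * c') := by rw [hb]; ring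
      obtain ⟨e2, he2⟩ := h1
      have hbc : b ∣ c' := by
        refine ⟨e2, ?_⟩
        apply mul_left_cancel₀ hane
        calc a * c' = c' * a := by ring
          _ = a * b * e2 := he2
          _ = a * (b * e2) := by ring
      obtain ⟨d, hd⟩ := hbc
      exact ⟨Ideal.Quotient.mk _ d, by rw [hd, map_mul]⟩
    · rintro ⟨d, hd⟩
      obtain ⟨d', rfl⟩ := Ideal.Quotient.mk_surjective d
      rw [← map_mul, Ideal.Quotient.eq, Ideal.mem_span_singleton] at hd
      obtain ⟨e, he⟩ := hd
      refine ⟨d' * a₁ + e * a', ?_⟩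
      have hc' : c' = b * d' + r * e := by
        have := sub_eq_iff_eq_add.mp he; rw [this]; ring
      rw [hc', ha₁, hb]; ring
  · intro c
    obtain ⟨c', rfl⟩ := Ideal.Quotient.mk_surjective c
    rw [← map_mul, Ideal.Quotient.eq_zero_iff_mem, Ideal.mem_span_singleton]
    constructor
    · rintro ⟨e, he⟩
      have hac : a ∣ c' := by
        refine ⟨e, ?_⟩
        apply mul_right_cancel₀ hbne
        calc c' * b = a * b * e := by rw [← hb, he]
          _ = a * e * b := by ring
      have hcmem : c' ∈ Ideal.span ({a', r} : Set P) := by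
        rw [ha, Ideal.mem_span_singleton]; exact hac
      obtain ⟨x, y, hxy⟩ := Ideal.mem_span_pair.mp hcmem
      refine ⟨Ideal.Quotient.mk _ x, ?_⟩
      rw [← map_mul, Ideal.Quotient.eq, Ideal.mem_span_singleton]
      exact ⟨y, by rw [← hxy]; ring⟩
    · rintro ⟨d, hd⟩
      obtain ⟨d', rfl⟩ := Ideal.Quotient.mk_surjective d
      rw [← map_mul, Ideal.Quotient.eq, Ideal.mem_span_singleton] at hd
      obtain ⟨e, he⟩ := hd
      refine ⟨d' * a₁ + e * b, ?_⟩
      have hc' : c' = d' * a' + r * e := by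
        have := sub_eq_iff_eq_add.mp he; rw [this]; ring
      rw [hc', ha₁, hb]; ring
end

section
/- For every nonzero integer n, the ring ℤ/nℤ is exact: for every matrix A ∈ (ℤ/nℤ)^{m×k}, row(A)^⊥⊥ = row(A) and col(A)^⊥⊥ = col(A). -/
set_option maxHeartbeats 1000000

open Matrix

/-- Orthogonal complement of a set of vectors over a commutative ring. -/
def perp {R : Type*} [CommRing R] {k : ℕ} (X : Set (Fin k → R)) : Set (Fin k → R) :=
  {v | ∀ x ∈ X, dotProduct x v = 0}


noncomputable def divN (n : ℤ) : ℤ →+ AddCircle (1 : ℚ) :=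
  AddMonoidHom.mk' (fun a => (((a : ℚ) / (n.natAbs : ℚ)) : AddCircle (1:ℚ)))
    (by
      intro a b
      push_cast [add_div]
      rw [AddCircle.coe_add])

lemma divN_apply (n a : ℤ) : divN n a = (((a : ℚ) / (n.natAbs : ℚ)) : AddCircle (1:ℚ)) := rfl

lemma divN_eq_zero_iff {n : ℤ} (hn : n ≠ 0) (a : ℤ) :
    divN n a = 0 ↔ a ∈ Ideal.span {n} := by
  have hN : (n.natAbs : ℚ) ≠ 0 := by
    exact_mod_cast Int.natAbs_ne_zero.mpr hn
  rw [divN_apply, AddCircle.coe_eq_zero_iff, Ideal.mem_span_singleton]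
  constructor
  · rintro ⟨z, hz⟩
    rw [zsmul_eq_mul, mul_one, eq_div_iff hN] at hz
    have h2 : z * (n.natAbs : ℤ) = a := by
      have h3 : ((z * (n.natAbs : ℤ) : ℤ) : ℚ) = ((a : ℤ) : ℚ) := by rw [Nat.cast_natAbs (α := ℚ)] at hz; push_cast at hz ⊢; exact hz
      exact_mod_cast h3
    exact (abs_dvd n a).mp ⟨z, by rw [Int.abs_eq_natAbs]; linarith [h2]⟩
  · rintro ⟨t, rfl⟩
    refine ⟨n.sign * t, ?_⟩
    rw [zsmul_eq_mul, mul_one, eq_div_iff hN]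
    push_cast
    rw [← Int.cast_natCast, ← Int.cast_mul]
    norm_cast
    rw [mul_assoc, mul_comm t |n|, ← mul_assoc, Int.sign_mul_abs]

noncomputable def iota (n : ℤ) (hn : n ≠ 0) : (ℤ ⧸ Ideal.span {n}) →ₗ[ℤ] AddCircle (1 : ℚ) :=
  Submodule.liftQ (Ideal.span {n}) (divN n).toIntLinearMap
    (fun a ha => (divN_eq_zero_iff hn a).mpr ha)

lemma iota_intCast {n : ℤ} (hn : n ≠ 0) (a : ℤ) :
    iota n hn ((a : ℤ) : ℤ ⧸ Ideal.span {n}) = divN n a := by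
  have h : ((a : ℤ) : ℤ ⧸ Ideal.span {n}) = Ideal.Quotient.mk (Ideal.span {n}) a :=
    (eq_intCast (Ideal.Quotient.mk (Ideal.span {n})) a).symm
  rw [h]
  exact Submodule.liftQ_apply _ _ _

lemma iota_injective {n : ℤ} (hn : n ≠ 0) : Function.Injective (iota n hn) := by
  rw [← LinearMap.ker_eq_bot]
  apply Submodule.ker_liftQ_eq_bot
  intro a ha
  exact (divN_eq_zero_iff hn a).mp ha

lemma exists_iota_eq {n : ℤ} (hn : n ≠ 0) (c : AddCircle (1 : ℚ))
    (hc : n.natAbs • c = 0) : ∃ r : ℤ ⧸ Ideal.span {n}, iota n hn r = c := by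
  obtain ⟨q, rfl⟩ := QuotientAddGroup.mk_surjective c
  have hN : (n.natAbs : ℚ) ≠ 0 := by exact_mod_cast Int.natAbs_ne_zero.mpr hn
  rw [← AddCircle.coe_nsmul, AddCircle.coe_eq_zero_iff] at hc
  obtain ⟨z, hz⟩ := hc
  rw [zsmul_eq_mul, mul_one] at hz
  refine ⟨((z : ℤ) : ℤ ⧸ Ideal.span {n}), ?_⟩
  rw [iota_intCast hn, divN_apply]
  congr 1
  rw [eq_comm, eq_div_iff hN]
  rw [nsmul_eq_mul, mul_comm] at hz
  exact_mod_cast hz.symm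


lemma intCast_surj (n : ℤ) : Function.Surjective (Int.cast : ℤ → ℤ ⧸ Ideal.span {n}) := by
  intro r
  obtain ⟨a, rfl⟩ := Ideal.Quotient.mk_surjective r
  exact ⟨a, (eq_intCast (Ideal.Quotient.mk (Ideal.span {n})) a)⟩

lemma natAbs_cast_eq_zero (n : ℤ) : ((n.natAbs : ℕ) : ℤ ⧸ Ideal.span {n}) = 0 := by
  have h1 : ((n : ℤ) : ℤ ⧸ Ideal.span {n}) = 0 := by
    rw [← eq_intCast (Ideal.Quotient.mk (Ideal.span {n})) n]
    exact Ideal.Quotient.eq_zero_iff_mem.mpr (Ideal.mem_span_singleton_self n)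
  obtain ⟨t, ht⟩ := Int.dvd_natAbs.mpr (dvd_refl n)
  have : ((n.natAbs : ℕ) : ℤ ⧸ Ideal.span {n}) = (((n * t : ℤ)) : ℤ ⧸ Ideal.span {n}) := by
    rw [← ht, Int.cast_natCast]
  rw [this, Int.cast_mul, h1, zero_mul]

lemma row_perp_perp {n : ℤ} (hn : n ≠ 0) {m k : ℕ}
    (A : Matrix (Fin m) (Fin k) (ℤ ⧸ Ideal.span {n})) :
    perp (perp (rowSpace A)) = rowSpace A := by
  apply Set.Subset.antisymm
  · intro v hv
    by_contra hvM
    set M : Submodule (ℤ ⧸ Ideal.span {n}) (Fin k → ℤ ⧸ Ideal.span {n}) :=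
      LinearMap.range A.vecMulLinear with hM
    have hMrow : ∀ x, x ∈ M ↔ x ∈ rowSpace A := by
      intro x
      constructor
      · rintro ⟨u, rfl⟩; exact ⟨u, rfl⟩
      · rintro ⟨u, rfl⟩; exact ⟨u, rfl⟩
    have hv' : v ∉ M := fun h => hvM ((hMrow v).mp h)
    have hg : M.mkQ v ≠ 0 := fun h => hv' ((Submodule.Quotient.mk_eq_zero M).mp h)
    obtain ⟨c, hc⟩ := CharacterModule.exists_character_apply_ne_zero_of_ne_zero hg
    -- torsion of each basis image
    have hsingle : ∀ j : Fin k, n.natAbs • (Pi.single j 1 : Fin k → ℤ ⧸ Ideal.span {n}) = 0 := by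
      intro j
      funext i
      simp only [Pi.smul_apply, Pi.zero_apply, nsmul_eq_mul, natAbs_cast_eq_zero, zero_mul]
    have htor : ∀ j : Fin k, n.natAbs • c (M.mkQ (Pi.single j 1)) = 0 := by
      intro j
      rw [← map_nsmul, ← map_nsmul, hsingle, map_zero, map_zero]
    choose w hw using fun j => exists_iota_eq hn _ (htor j)
    -- key identity
    have key : ∀ x : Fin k → ℤ ⧸ Ideal.span {n},
        c (M.mkQ x) = iota n hn (dotProduct x w) := by
      intro x
      have hsum : c (M.mkQ x) = ∑ j, c (M.mkQ (Pi.single j (x j))) := by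
        conv_lhs => rw [← Finset.univ_sum_single x]
        rw [map_sum, map_sum]
      have hterm : ∀ j, c (M.mkQ (Pi.single j (x j))) = iota n hn (x j * w j) := by
        intro j
        obtain ⟨a, ha⟩ := intCast_surj n (x j)
        have h1 : Pi.single j (x j) = a • (Pi.single j 1 : Fin k → ℤ ⧸ Ideal.span {n}) := by
          rw [← ha, ← Pi.single_smul, zsmul_eq_mul, mul_one]
        rw [h1, map_zsmul, map_zsmul, ← hw j, ← map_zsmul, zsmul_eq_mul, ← ha]
      rw [hsum, dotProduct, map_sum]
      exact Finset.sum_congr rfl (fun j _ => hterm j)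
    -- w is in perp (rowSpace A)
    have hwperp : w ∈ perp (rowSpace A) := by
      intro x hx
      have hxM : x ∈ M := (hMrow x).mpr hx
      have h0 : c (M.mkQ x) = 0 := by
        rw [Submodule.mkQ_apply, (Submodule.Quotient.mk_eq_zero M).mpr hxM, map_zero]
      rw [key x] at h0
      have := iota_injective hn (h0.trans (map_zero (iota n hn)).symm)
      exact this
    -- contradiction
    have hdot : dotProduct w v = 0 := hv w hwperp
    have : c (M.mkQ v) = 0 := by
      rw [key v, dotProduct_comm, hdot, map_zero]
    exact hc this
  · intro x hx w hw
    rw [dotProduct_comm]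
    exact hw x hx


lemma colSpace_eq_rowSpace_transpose {S : Type*} [CommRing S] {m k : ℕ}
    (A : Matrix (Fin m) (Fin k) S) : colSpace A = rowSpace Aᵀ := by
  ext y
  constructor
  · rintro ⟨v, rfl⟩
    exact ⟨v, (Matrix.vecMul_transpose A v).symm⟩
  · rintro ⟨u, rfl⟩
    exact ⟨u, (Matrix.vecMul_transpose A u)⟩

/-- For every nonzero integer `n`, the ring `ℤ/nℤ` is exact:
`row(A)^⊥⊥ = row(A)` and `col(A)^⊥⊥ = col(A)` for every matrix `A`. -/
theorem zmod_exact (n : ℤ) (hn : n ≠ 0) {m k : ℕ}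
    (A : Matrix (Fin m) (Fin k) (ℤ ⧸ Ideal.span {n})) :
    perp (perp (rowSpace A)) = rowSpace A ∧ perp (perp (colSpace A)) = colSpace A := by
  refine ⟨row_perp_perp hn A, ?_⟩
  rw [colSpace_eq_rowSpace_transpose]
  exact row_perp_perp hn Aᵀ
end

section
/- Let P be a principal ideal domain, r ∈ P \ {0}, and R = P/rP. Then for every A ∈ R^{m×n}, the R-module row(A)^⊥ is isomorphic to R^{1×n}/row(A). -/
open Matrix

/-- The orthogonal complement of a set of row vectors, as a submodule of column vectors. -/
def perpSubmodule {R : Type*} [CommRing R] {n : ℕ} (X : Set (Fin n → R)) :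
    Submodule R (Fin n → R) where
  carrier := {v | ∀ x ∈ X, dotProduct x v = 0}
  add_mem' := by
    intro v w hv hw x hx
    rw [dotProduct_add, hv x hx, hw x hx, add_zero]
  zero_mem' := by
    intro x hx
    simp [dotProduct]
  smul_mem' := by
    intro a v hv x hx
    rw [dotProduct_smul, hv x hx, smul_zero]


section auxCyclic
variable {P : Type*} [CommRing P] [IsDomain P]

/-- Duality for cyclic modules: `Hom(P/(q), P/(qs)) ≅ P/(q)` when `q ≠ 0`, `s ≠ 0`. -/
theorem dualCyclic (q s : P) (hq : q ≠ 0) (hs : s ≠ 0) :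
    Nonempty (((P ⧸ (Submodule.span P {q})) →ₗ[P] P ⧸ Ideal.span {q * s}) ≃ₗ[P]
      (P ⧸ (Submodule.span P {q}))) := by
  have hle : ∀ p : P, Submodule.span P {q} ≤
      Submodule.comap (LinearMap.lsmul P P (p * s)) (Ideal.span {q * s}) := by
    intro p x hx
    rw [Submodule.mem_span_singleton] at hx
    obtain ⟨c, rfl⟩ := hx
    simp only [Submodule.mem_comap, LinearMap.lsmul_apply, smul_eq_mul]
    rw [Ideal.mem_span_singleton]
    exact ⟨c * p, by ring⟩
  set F : P → ((P ⧸ (Submodule.span P {q})) →ₗ[P] P ⧸ Ideal.span {q * s}) :=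
    fun p => Submodule.mapQ _ _ (LinearMap.lsmul P P (p * s)) (hle p) with hF
  have hFapp : ∀ p x, F p (Submodule.Quotient.mk x) =
      Submodule.Quotient.mk (p * s * x) := by
    intro p x
    simp only [hF, Submodule.mapQ_apply, LinearMap.lsmul_apply, smul_eq_mul]
  have hFlin : ∀ (a b : P) (x : P ⧸ (Submodule.span P {q})),
      F (a * b) x = a • F b x := by
    intro a b x
    obtain ⟨y, rfl⟩ := Submodule.Quotient.mk_surjective _ x
    rw [hFapp, hFapp, ← Submodule.Quotient.mk_smul]
    congr 1
    ring_nf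
  have hFadd : ∀ (a b : P), F (a + b) = F a + F b := by
    intro a b
    apply LinearMap.ext
    intro x
    obtain ⟨y, rfl⟩ := Submodule.Quotient.mk_surjective _ x
    rw [LinearMap.add_apply, hFapp, hFapp, hFapp, ← Submodule.Quotient.mk_add]
    congr 1; ring
  set Fl : P →ₗ[P] ((P ⧸ (Submodule.span P {q})) →ₗ[P] P ⧸ Ideal.span {q * s}) :=
    { toFun := F
      map_add' := hFadd
      map_smul' := fun a b => by
        apply LinearMap.ext; intro x
        simp only [RingHom.id_apply, LinearMap.smul_apply, smul_eq_mul]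
        exact hFlin a b x } with hFl
  have hker : Submodule.span P {q} ≤ LinearMap.ker Fl := by
    intro x hx
    rw [Submodule.mem_span_singleton] at hx
    obtain ⟨c, rfl⟩ := hx
    rw [LinearMap.mem_ker]
    apply LinearMap.ext; intro y
    obtain ⟨z, rfl⟩ := Submodule.Quotient.mk_surjective _ y
    rw [LinearMap.zero_apply]
    show F _ _ = _
    rw [hFapp, Submodule.Quotient.mk_eq_zero]
    rw [smul_eq_mul, Ideal.mem_span_singleton]
    exact ⟨c * z, by ring⟩
  set G := Submodule.liftQ _ Fl hker with hG
  have hGapp : ∀ p x, G (Submodule.Quotient.mk p) (Submodule.Quotient.mk x)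
      = Submodule.Quotient.mk (p * s * x) := fun p x => hFapp p x
  have hinj : Function.Injective G := by
    rw [← LinearMap.ker_eq_bot, Submodule.ker_liftQ, Submodule.eq_bot_iff]
    intro x hx
    rw [Submodule.mem_map] at hx
    obtain ⟨p, hp, rfl⟩ := hx
    rw [LinearMap.mem_ker] at hp
    have := congrArg (fun f => f (Submodule.Quotient.mk (1 : P))) hp
    simp only [LinearMap.zero_apply] at this
    rw [show Fl p = F p from rfl] at this
    rw [hFapp, mul_one, Submodule.Quotient.mk_eq_zero, Ideal.mem_span_singleton] at this
    obtain ⟨c, hc⟩ := this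
    rw [Submodule.mkQ_apply, Submodule.Quotient.mk_eq_zero, Submodule.mem_span_singleton]
    refine ⟨c, ?_⟩
    have : s * (c * q) = s * p := by linear_combination -hc
    have := mul_left_cancel₀ hs this
    rw [smul_eq_mul, ← this]
  have hsurj : Function.Surjective G := by
    intro φ
    obtain ⟨y, hy⟩ := Submodule.Quotient.mk_surjective _ (φ (Submodule.Quotient.mk 1))
    have hqy : Submodule.Quotient.mk (q * y) = (0 : P ⧸ Ideal.span {q * s}) := by
      have : q • φ (Submodule.Quotient.mk (1:P)) = φ (Submodule.Quotient.mk (q : P)) := by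
        rw [← LinearMap.map_smul, ← Submodule.Quotient.mk_smul, smul_eq_mul, mul_one]
      rw [← hy, ← Submodule.Quotient.mk_smul, smul_eq_mul] at this
      rw [this]
      have : Submodule.Quotient.mk (q : P) = (0 : P ⧸ Submodule.span P {q}) := by
        rw [Submodule.Quotient.mk_eq_zero]
        exact Submodule.mem_span_singleton_self q
      rw [this, LinearMap.map_zero]
    rw [Submodule.Quotient.mk_eq_zero, Ideal.mem_span_singleton] at hqy
    obtain ⟨c, hc⟩ := hqy
    have hy' : y = s * c := mul_left_cancel₀ hq (by rw [hc]; ring)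
    refine ⟨Submodule.Quotient.mk c, ?_⟩
    apply LinearMap.ext; intro x
    obtain ⟨z, rfl⟩ := Submodule.Quotient.mk_surjective _ x
    rw [hGapp]
    have : φ (Submodule.Quotient.mk z) = z • φ (Submodule.Quotient.mk (1:P)) := by
      rw [← LinearMap.map_smul, ← Submodule.Quotient.mk_smul, smul_eq_mul, mul_one]
    rw [this, ← hy, ← Submodule.Quotient.mk_smul]
    congr 1
    rw [smul_eq_mul, hy']; ring
  exact ⟨(LinearEquiv.ofBijective G ⟨hinj, hsurj⟩).symm⟩
end auxCyclic

theorem sum_single_eq {R : Type*} [CommRing R] {n : ℕ} (x : Fin n → R) :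
    ∑ i, x i • (Pi.single i (1:R) : Fin n → R) = x := by
  funext j
  rw [Finset.sum_apply]
  rw [Finset.sum_eq_single j]
  · simp
  · intro i _ hij
    simp [Pi.single_apply, hij]
  · simp

section perp
variable {R : Type*} [CommRing R] {m n : ℕ}

/-- `v ↦ (x ↦ x ⬝ᵥ v)` as a linear map. -/
def dotRight (v : Fin n → R) : (Fin n → R) →ₗ[R] R where
  toFun x := dotProduct x v
  map_add' x y := add_dotProduct x y v
  map_smul' c x := smul_dotProduct c x v

theorem perpEquivDual (A : Matrix (Fin m) (Fin n) R) :
    Nonempty ((perpSubmodule {x | ∃ u, x = Matrix.vecMul u A}) ≃ₗ[R]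
      (((Fin n → R) ⧸ LinearMap.range A.vecMulLinear) →ₗ[R] R)) := by
  set N := LinearMap.range A.vecMulLinear with hN
  have hmem : ∀ x, x ∈ N ↔ x ∈ {x | ∃ u, x = Matrix.vecMul u A} := by
    intro x
    constructor
    · rintro ⟨u, rfl⟩; exact ⟨u, rfl⟩
    · rintro ⟨u, rfl⟩; exact ⟨u, rfl⟩
  have hker : ∀ v : perpSubmodule {x | ∃ u, x = Matrix.vecMul u A},
      N ≤ LinearMap.ker (dotRight (v : Fin n → R)) := by
    rintro v x hx
    rw [LinearMap.mem_ker]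
    exact v.2 x ((hmem x).mp hx)
  set T : (perpSubmodule {x | ∃ u, x = Matrix.vecMul u A}) →ₗ[R]
      (((Fin n → R) ⧸ N) →ₗ[R] R) :=
    { toFun := fun v => N.liftQ (dotRight (v : Fin n → R)) (hker v)
      map_add' := fun v w => by
        apply LinearMap.ext; intro x
        obtain ⟨y, rfl⟩ := Submodule.Quotient.mk_surjective _ x
        simp only [Submodule.liftQ_apply, LinearMap.add_apply]
        show dotProduct y ((v : Fin n → R) + w) = _
        rw [dotProduct_add]; rfl
      map_smul' := fun c v => by
        apply LinearMap.ext; intro x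
        obtain ⟨y, rfl⟩ := Submodule.Quotient.mk_surjective _ x
        simp only [Submodule.liftQ_apply, RingHom.id_apply, LinearMap.smul_apply]
        show dotProduct y (c • (v : Fin n → R)) = _
        rw [dotProduct_smul]; rfl } with hT
  have hmemperp : ∀ φ : ((Fin n → R) ⧸ N) →ₗ[R] R,
      (fun i => φ (Submodule.Quotient.mk (Pi.single i 1))) ∈
        perpSubmodule {x | ∃ u, x = Matrix.vecMul u A} := by
    intro φ x hx
    have key : dotProduct x (fun i => φ (Submodule.Quotient.mk (Pi.single i 1)))
        = φ (Submodule.Quotient.mk x) := by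
      rw [dotProduct]
      conv_rhs => rw [← sum_single_eq x]
      rw [← Submodule.mkQ_apply, map_sum, map_sum]
      simp only [Submodule.mkQ_apply, Submodule.Quotient.mk_smul, _root_.map_smul, smul_eq_mul]
    rw [key]
    have : Submodule.Quotient.mk x = (0 : (Fin n → R) ⧸ N) := by
      rw [Submodule.Quotient.mk_eq_zero]
      exact (hmem x).mpr hx
    rw [this, map_zero]
  set S : (((Fin n → R) ⧸ N) →ₗ[R] R) →ₗ[R]
      (perpSubmodule {x | ∃ u, x = Matrix.vecMul u A}) :=
    { toFun := fun φ => ⟨fun i => φ (Submodule.Quotient.mk (Pi.single i 1)), hmemperp φ⟩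
      map_add' := fun φ ψ => rfl
      map_smul' := fun c φ => rfl } with hS
  refine ⟨LinearEquiv.ofLinear T S ?_ ?_⟩
  · apply LinearMap.ext; intro φ
    apply LinearMap.ext; intro x
    obtain ⟨y, rfl⟩ := Submodule.Quotient.mk_surjective _ x
    simp only [LinearMap.comp_apply, LinearMap.id_apply, hT, hS, LinearMap.coe_mk,
      AddHom.coe_mk, Submodule.liftQ_apply]
    show dotProduct y (fun i => φ (Submodule.Quotient.mk (Pi.single i 1))) = _
    rw [dotProduct]
    conv_rhs => rw [← sum_single_eq y]
    rw [← Submodule.mkQ_apply, map_sum, map_sum]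
    simp only [Submodule.mkQ_apply, Submodule.Quotient.mk_smul, _root_.map_smul, smul_eq_mul]
  · apply LinearMap.ext; intro v
    apply Subtype.ext
    funext i
    simp only [LinearMap.comp_apply, LinearMap.id_apply, hT, hS, LinearMap.coe_mk,
      AddHom.coe_mk, Submodule.liftQ_apply]
    show dotProduct (Pi.single i 1) (v : Fin n → R) = _
    rw [single_dotProduct, one_mul]
end perp

set_option maxHeartbeats 1000000 in
/-- For `R = P/rP` with `P` a PID and `r ≠ 0`, and any matrix `A` over `R`,
`row(A)^⊥ ≅ R^{1×n}/row(A)` as `R`-modules. -/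
theorem perp_rowSpace_iso_quotient {P : Type*} [CommRing P] [IsDomain P]
    [IsPrincipalIdealRing P] (r : P) (hr : r ≠ 0) {m n : ℕ}
    (A : Matrix (Fin m) (Fin n) (P ⧸ Ideal.span {r})) :
    Nonempty
      ((perpSubmodule {x | ∃ u, x = Matrix.vecMul u A}) ≃ₗ[P ⧸ Ideal.span {r}]
        ((Fin n → P ⧸ Ideal.span {r}) ⧸ LinearMap.range A.vecMulLinear)) := by
  have hsurj : Function.Surjective (algebraMap P (P ⧸ Ideal.span {r})) := by
    rw [Ideal.Quotient.algebraMap_eq]; exact Ideal.Quotient.mk_surjective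
  set M := (Fin n → (P ⧸ Ideal.span {r})) ⧸ LinearMap.range A.vecMulLinear with hM
  have hann : ∀ x : M, r • x = 0 := by
    intro x
    rw [← algebraMap_smul (P ⧸ Ideal.span {r}) r x]
    have h0 : algebraMap P (P ⧸ Ideal.span {r}) r = 0 := by
      rw [Ideal.Quotient.algebraMap_eq, Ideal.Quotient.eq_zero_iff_mem]
      exact Ideal.mem_span_singleton_self r
    rw [h0, zero_smul]
  have hfinR : Module.Finite P (P ⧸ Ideal.span {r}) :=
    Module.Finite.of_surjective (Ideal.span {r}).mkQ (Submodule.Quotient.mk_surjective _)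
  have hfinM : Module.Finite P M :=
    Module.Finite.of_surjective
      ((LinearMap.range A.vecMulLinear).mkQ.restrictScalars P)
      (Submodule.Quotient.mk_surjective _)
  have htors : Module.IsTorsion P M :=
    fun x => ⟨⟨r, mem_nonZeroDivisors_of_ne_zero hr⟩, hann x⟩
  obtain ⟨ι, hι, p, hp, e, ⟨eD⟩⟩ := Module.equiv_directSum_of_isTorsion htors
  classical
  have hdvd : ∀ i, p i ^ e i ∣ r := by
    intro i
    set z := DirectSum.lof P ι (fun j => P ⧸ (P ∙ p j ^ e j)) i
      (Submodule.Quotient.mk 1) with hz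
    have h1 : r • z = 0 := by
      have h := hann (eD.symm z)
      rw [← _root_.map_smul] at h
      have := eD.symm.injective (h.trans (map_zero eD.symm).symm)
      exact this
    have h3 : r • (Submodule.Quotient.mk 1 : P ⧸ (P ∙ p i ^ e i)) = 0 := by
      have h2 := congrArg (fun f : DirectSum ι (fun j => P ⧸ (P ∙ p j ^ e j)) => f i) h1
      simp only [hz, DirectSum.smul_apply, DirectSum.zero_apply, DirectSum.lof_apply] at h2
      exact h2
    rw [← Submodule.Quotient.mk_smul, smul_eq_mul, mul_one,
      Submodule.Quotient.mk_eq_zero, Submodule.mem_span_singleton] at h3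
    obtain ⟨c, hc⟩ := h3
    exact ⟨c, by rw [← hc, smul_eq_mul]; ring⟩
  have hcyc : ∀ i, Nonempty (((P ⧸ (P ∙ p i ^ e i)) →ₗ[P] (P ⧸ Ideal.span {r})) ≃ₗ[P]
      (P ⧸ (P ∙ p i ^ e i))) := by
    intro i
    obtain ⟨s, hs⟩ := hdvd i
    have hq : p i ^ e i ≠ 0 := pow_ne_zero _ (hp i).ne_zero
    have hs0 : s ≠ 0 := fun h => hr (by rw [hs, h, mul_zero])
    have := dualCyclic (p i ^ e i) s hq hs0
    rw [← hs] at this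
    exact this
  obtain ⟨E0⟩ := perpEquivDual A
  set ed : ∀ i, ((P ⧸ (P ∙ p i ^ e i)) →ₗ[P] (P ⧸ Ideal.span {r})) ≃ₗ[P] (P ⧸ (P ∙ p i ^ e i)) :=
    fun i => (hcyc i).some with hed
  set eD' : M ≃ₗ[P] (∀ i, P ⧸ (P ∙ p i ^ e i)) :=
    eD.trans (DirectSum.linearEquivFunOnFintype P ι fun i => P ⧸ (P ∙ p i ^ e i)) with heD'
  have c1 : (perpSubmodule {x | ∃ u, x = Matrix.vecMul u A}) ≃ₗ[P] (M →ₗ[(P ⧸ Ideal.span {r})] (P ⧸ Ideal.span {r})) :=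
    E0.restrictScalars P
  have c2 : (M →ₗ[(P ⧸ Ideal.span {r})] (P ⧸ Ideal.span {r})) ≃ₗ[P] (M →ₗ[P] (P ⧸ Ideal.span {r})) :=
    (LinearMap.extendScalarsOfSurjectiveEquiv hsurj).symm
  have c3 : (M →ₗ[P] (P ⧸ Ideal.span {r})) ≃ₗ[P] ((∀ i, P ⧸ (P ∙ p i ^ e i)) →ₗ[P] (P ⧸ Ideal.span {r})) :=
    LinearEquiv.arrowCongr eD' (LinearEquiv.refl P (P ⧸ Ideal.span {r}))
  have c4 : ((∀ i, P ⧸ (P ∙ p i ^ e i)) →ₗ[P] (P ⧸ Ideal.span {r})) ≃ₗ[P]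
      (∀ i, (P ⧸ (P ∙ p i ^ e i)) →ₗ[P] (P ⧸ Ideal.span {r})) :=
    (LinearMap.lsum P (fun i => P ⧸ (P ∙ p i ^ e i)) P).symm
  have c5 : (∀ i, (P ⧸ (P ∙ p i ^ e i)) →ₗ[P] (P ⧸ Ideal.span {r})) ≃ₗ[P] (∀ i, P ⧸ (P ∙ p i ^ e i)) :=
    LinearEquiv.piCongrRight ed
  have total : (perpSubmodule {x | ∃ u, x = Matrix.vecMul u A}) ≃ₗ[P] M :=
    c1 ≪≫ₗ c2 ≪≫ₗ c3 ≪≫ₗ c4 ≪≫ₗ c5 ≪≫ₗ eD'.symm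
  exact ⟨total.extendScalarsOfSurjective hsurj⟩
end

section
/- Let P be a principal ideal domain, r ∈ P, and R = P/rP. Then for every matrix A ∈ R^{m×n}, row(A) and col(A) are isomorphic as R-modules. -/
open Matrix

lemma pseudoDiag_iso {R : Type*} [CommRing R] {k l m : ℕ}
    (f : Fin k → Fin m) (hf : Function.Injective f) (δ : Fin k → R)
    (D : Matrix (Fin m) (Fin k ⊕ Fin l) R)
    (hD1 : ∀ p i, D p (Sum.inl i) = if f i = p then δ i else 0)
    (hD2 : ∀ p j, D p (Sum.inr j) = 0) :
    Nonempty ((LinearMap.range D.vecMulLinear) ≃ₗ[R] (LinearMap.range D.mulVecLin)) := by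
  classical
  let σ : (∀ i : Fin k, Submodule.span R {δ i}) →ₗ[R] (Fin m → R) :=
    { toFun := fun t p => ∑ i, if f i = p then (t i : R) else 0
      map_add' := by
        intro s t
        funext p
        show (∑ i, if f i = p then ((s + t) i : R) else 0)
          = (∑ i, if f i = p then (s i : R) else 0) + ∑ i, if f i = p then (t i : R) else 0
        rw [← Finset.sum_add_distrib]
        refine Finset.sum_congr rfl fun i _ => ?_
        split_ifs <;> simp
      map_smul' := by
        intro c t
        funext p
        show (∑ i, if f i = p then ((c • t) i : R) else 0)
          = c • ∑ i, if f i = p then (t i : R) else 0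
        rw [Finset.smul_sum]
        refine Finset.sum_congr rfl fun i _ => ?_
        split_ifs <;> simp }
  let τ : (∀ i : Fin k, Submodule.span R {δ i}) →ₗ[R] (Fin k ⊕ Fin l → R) :=
    { toFun := fun t => Sum.elim (fun i => (t i : R)) 0
      map_add' := by
        intro s t; funext j
        cases j with
        | inl i => show ((s + t) i : R) = (s i : R) + (t i : R); simp
        | inr j => show (0:R) = (0:R) + (0:R); simp
      map_smul' := by
        intro c t; funext j
        cases j with
        | inl i => show ((c • t) i : R) = c • ((t i : R)); simp
        | inr j => show (0:R) = c • (0:R); simp }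
  have key : ∀ (t : ∀ i : Fin k, Submodule.span R {δ i}) (j : Fin k), σ t (f j) = (t j : R) := by
    intro t j
    show (∑ i, if f i = f j then (t i : R) else 0) = t j
    rw [Finset.sum_eq_single j]
    · simp
    · intro i _ hij
      rw [if_neg (fun h => hij (hf h))]
    · simp
  have hσinj : Function.Injective σ := by
    intro s t h
    funext j
    have h2 : σ s (f j) = σ t (f j) := congrFun h (f j)
    rw [key, key] at h2
    exact Subtype.ext h2
  have hτinj : Function.Injective τ := by
    intro s t h
    funext j
    exact Subtype.ext (congrFun h (Sum.inl j))
  have hmul : ∀ (x : Fin k ⊕ Fin l → R) (p : Fin m),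
      (D *ᵥ x) p = ∑ i, if f i = p then δ i * x (Sum.inl i) else 0 := by
    intro x p
    show (∑ j, D p j * x j) = _
    rw [Fintype.sum_sum_type]
    have : (∑ j, D p (Sum.inr j) * x (Sum.inr j)) = 0 := by
      simp [hD2]
    rw [this, add_zero]
    refine Finset.sum_congr rfl fun i _ => ?_
    rw [hD1]; split_ifs <;> simp
  have hvm : ∀ (x : Fin m → R) (j : Fin k ⊕ Fin l),
      (x ᵥ* D) j = Sum.elim (fun i => x (f i) * δ i) (fun _ => (0:R)) j := by
    intro x j
    show (∑ p, x p * D p j) = _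
    cases j with
    | inl i =>
      rw [Finset.sum_eq_single (f i)]
      · simp [hD1]
      · intro p _ hp
        rw [hD1, if_neg (fun h => hp h.symm), mul_zero]
      · simp
    | inr j => simp [hD2]
  have hσrange : LinearMap.range σ = LinearMap.range D.mulVecLin := by
    apply le_antisymm
    · rintro _ ⟨t, rfl⟩
      choose c hc using fun i => Submodule.mem_span_singleton.mp (t i).2
      refine ⟨Sum.elim c 0, ?_⟩
      funext p
      rw [mulVecLin_apply, hmul]
      refine Finset.sum_congr rfl fun i _ => ?_
      split_ifs
      · rw [Sum.elim_inl, ← hc i, smul_eq_mul, mul_comm]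
      · rfl
    · rintro _ ⟨x, rfl⟩
      refine ⟨fun i => ⟨x (Sum.inl i) • δ i,
        Submodule.smul_mem _ _ (Submodule.mem_span_singleton_self _)⟩, ?_⟩
      funext p
      show (∑ i, if f i = p then x (Sum.inl i) • δ i else 0) = (D.mulVecLin x) p
      rw [mulVecLin_apply, hmul]
      refine Finset.sum_congr rfl fun i _ => ?_
      split_ifs
      · rw [smul_eq_mul, mul_comm]
      · rfl
  have hτrange : LinearMap.range τ = LinearMap.range D.vecMulLinear := by
    apply le_antisymm
    · rintro _ ⟨t, rfl⟩
      choose c hc using fun i => Submodule.mem_span_singleton.mp (t i).2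
      refine ⟨fun p => ∑ i, if f i = p then c i else 0, ?_⟩
      funext j
      rw [vecMulLinear_apply, hvm]
      cases j with
      | inl i =>
        have : (∑ i', if f i' = f i then c i' else 0) = c i := by
          rw [Finset.sum_eq_single i]
          · simp
          · intro i' _ hii
            rw [if_neg (fun h => hii (hf h))]
          · simp
        simp only [Sum.elim_inl, this]
        show c i * δ i = (t i : R)
        rw [← hc i, smul_eq_mul]
      | inr j =>
        show (0:R) = (0:R)
        rfl
    · rintro _ ⟨x, rfl⟩
      refine ⟨fun i => ⟨x (f i) • δ i,
        Submodule.smul_mem _ _ (Submodule.mem_span_singleton_self _)⟩, ?_⟩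
      funext j
      rw [vecMulLinear_apply, hvm]
      cases j with
      | inl i => show x (f i) • δ i = x (f i) * δ i; rw [smul_eq_mul]
      | inr j => rfl
  exact ⟨(LinearEquiv.ofEq _ _ hτrange.symm).trans
    ((LinearEquiv.ofInjective τ hτinj).symm.trans
      ((LinearEquiv.ofInjective σ hσinj).trans (LinearEquiv.ofEq _ _ hσrange)))⟩


lemma col_iso_of_eq_mul {R : Type*} [CommRing R] {m n : ℕ} {ι : Type*} [Fintype ι] [DecidableEq ι]
    (A : Matrix (Fin m) (Fin n) R) (M M' : Matrix (Fin m) (Fin m) R)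
    (D : Matrix (Fin m) ι R) (N : Matrix ι (Fin n) R) (N' : Matrix (Fin n) ι R)
    (hA : A = M * D * N) (hM : M * M' = 1) (hM' : M' * M = 1)
    (hN : N * N' = 1) (hN' : N' * N = 1) :
    Nonempty ((LinearMap.range D.mulVecLin) ≃ₗ[R] (LinearMap.range A.mulVecLin)) := by
  have hNtop : LinearMap.range N.mulVecLin = ⊤ := by
    rw [LinearMap.range_eq_top]
    intro y
    exact ⟨N' *ᵥ y, by rw [mulVecLin_apply, mulVec_mulVec, hN, one_mulVec]⟩
  let eM : (Fin m → R) ≃ₗ[R] (Fin m → R) :=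
    LinearEquiv.ofLinear M.mulVecLin M'.mulVecLin
      (by rw [← mulVecLin_mul, hM, mulVecLin_one]) (by rw [← mulVecLin_mul, hM', mulVecLin_one])
  have hrange : Submodule.map (eM : (Fin m → R) →ₗ[R] (Fin m → R)) (LinearMap.range D.mulVecLin)
      = LinearMap.range A.mulVecLin := by
    have h1 : A.mulVecLin = (M.mulVecLin ∘ₗ D.mulVecLin) ∘ₗ N.mulVecLin := by
      rw [hA, mulVecLin_mul, mulVecLin_mul]
    rw [h1, LinearMap.range_comp_of_range_eq_top _ hNtop, LinearMap.range_comp]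
    rfl
  exact ⟨(eM.submoduleMap (LinearMap.range D.mulVecLin)).trans (LinearEquiv.ofEq _ _ hrange)⟩

lemma row_iso_of_eq_mul {R : Type*} [CommRing R] {m n : ℕ} {ι : Type*} [Fintype ι] [DecidableEq ι]
    (A : Matrix (Fin m) (Fin n) R) (M M' : Matrix (Fin m) (Fin m) R)
    (D : Matrix (Fin m) ι R) (N : Matrix ι (Fin n) R) (N' : Matrix (Fin n) ι R)
    (hA : A = M * D * N) (hM : M * M' = 1) (hM' : M' * M = 1)
    (hN : N * N' = 1) (hN' : N' * N = 1) :
    Nonempty ((LinearMap.range D.vecMulLinear) ≃ₗ[R] (LinearMap.range A.vecMulLinear)) := by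
  have hMtop : LinearMap.range M.vecMulLinear = ⊤ := by
    rw [LinearMap.range_eq_top]
    intro y
    exact ⟨y ᵥ* M', by rw [vecMulLinear_apply, vecMul_vecMul, hM', vecMul_one]⟩
  let eN : (ι → R) ≃ₗ[R] (Fin n → R) :=
    LinearEquiv.ofLinear N.vecMulLinear N'.vecMulLinear
      (LinearMap.ext fun x => by
        show (x ᵥ* N') ᵥ* N = x
        rw [vecMul_vecMul, hN', vecMul_one])
      (LinearMap.ext fun x => by
        show (x ᵥ* N) ᵥ* N' = x
        rw [vecMul_vecMul, hN, vecMul_one])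
  have hrange : Submodule.map (eN : (ι → R) →ₗ[R] (Fin n → R)) (LinearMap.range D.vecMulLinear)
      = LinearMap.range A.vecMulLinear := by
    have h1 : A.vecMulLinear = (N.vecMulLinear ∘ₗ D.vecMulLinear) ∘ₗ M.vecMulLinear := by
      apply LinearMap.ext
      intro x
      simp only [vecMulLinear_apply, LinearMap.comp_apply, hA, vecMul_vecMul]
    rw [h1, LinearMap.range_comp_of_range_eq_top _ hMtop, LinearMap.range_comp]
    rfl
  exact ⟨(eN.submoduleMap (LinearMap.range D.vecMulLinear)).trans (LinearEquiv.ofEq _ _ hrange)⟩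

/-- For `R = P/rP` with `P` a PID (`r` arbitrary), the row space and column space of any
matrix over `R` are isomorphic as `R`-modules. -/
theorem rowSpace_iso_colSpace {P : Type*} [CommRing P] [IsDomain P]
    [IsPrincipalIdealRing P] (r : P) {m n : ℕ}
    (A : Matrix (Fin m) (Fin n) (P ⧸ Ideal.span {r})) :
    Nonempty
      ((LinearMap.range A.vecMulLinear) ≃ₗ[P ⧸ Ideal.span {r}]
        (LinearMap.range A.mulVecLin)) := by
  classical
  let π : P →+* (P ⧸ Ideal.span {r}) := Ideal.Quotient.mk _
  choose lift hlift using fun x : P ⧸ Ideal.span {r} => Ideal.Quotient.mk_surjective x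
  let B : Matrix (Fin m) (Fin n) P := fun p i => lift (A p i)
  have hB : B.map π = A := by funext p i; exact hlift _
  let em := Pi.basisFun P (Fin m)
  let en := Pi.basisFun P (Fin n)
  let ψ : (Fin n → P) →ₗ[P] (Fin m → P) := Matrix.toLin' B
  obtain ⟨k, snf⟩ := Submodule.smithNormalForm em (LinearMap.range ψ)
  obtain ⟨l, bK⟩ := Submodule.basisOfPid en (LinearMap.ker ψ)
  -- a section of ψ over its range
  choose g hg using fun i : Fin k => (snf.bN i).2
  let s : (LinearMap.range ψ) →ₗ[P] (Fin n → P) := (snf.bN.constr P) g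
  have hs : ∀ ν : LinearMap.range ψ, ψ (s ν) = ν := by
    intro ν
    have hcomp : ψ ∘ₗ s = (LinearMap.range ψ).subtype := by
      apply snf.bN.ext
      intro i
      show ψ (s (snf.bN i)) = (snf.bN i : Fin m → P)
      rw [show s (snf.bN i) = g i from snf.bN.constr_basis P g i]
      exact hg i
    exact LinearMap.congr_fun hcomp ν
  -- splitting equivalence
  let h : ((LinearMap.range ψ) × (LinearMap.ker ψ)) →ₗ[P] (Fin n → P) :=
    s ∘ₗ (LinearMap.fst P _ _) + (LinearMap.ker ψ).subtype ∘ₗ (LinearMap.snd P _ _)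
  have happ : ∀ z, h z = s z.1 + (z.2 : Fin n → P) := fun z => rfl
  have hinj : Function.Injective h := by
    intro z w hzw
    rw [happ, happ] at hzw
    have h1 : ψ (s z.1 + (z.2 : Fin n → P)) = ψ (s w.1 + (w.2 : Fin n → P)) := by rw [hzw]
    rw [map_add, map_add, hs, hs, z.2.2, w.2.2, add_zero, add_zero] at h1
    have h2 : z.1 = w.1 := Subtype.ext h1
    have h3 : (z.2 : Fin n → P) = (w.2 : Fin n → P) := by
      have := hzw
      rw [h2] at this
      exact add_left_cancel this
    exact Prod.ext h2 (Subtype.ext h3)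
  have hsurj : Function.Surjective h := by
    intro z
    refine ⟨⟨⟨ψ z, LinearMap.mem_range_self ψ z⟩,
      ⟨z - s ⟨ψ z, LinearMap.mem_range_self ψ z⟩, ?_⟩⟩, ?_⟩
    · rw [LinearMap.mem_ker, map_sub, hs]
      simp
    · rw [happ]
      simp
  let gE := LinearEquiv.ofBijective h ⟨hinj, hsurj⟩
  let c : Module.Basis (Fin k ⊕ Fin l) P (Fin n → P) := (snf.bN.prod bK).map gE
  have hc_inl : ∀ i, c (Sum.inl i) = s (snf.bN i) := by
    intro i
    rw [Module.Basis.map_apply]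
    have : (snf.bN.prod bK) (Sum.inl i) = (snf.bN i, 0) := by
      simp [Module.Basis.prod_apply]
    rw [this]
    show s (snf.bN i) + ((0 : LinearMap.ker ψ) : Fin n → P) = s (snf.bN i)
    simp
  have hc_inr : ∀ j, c (Sum.inr j) = (bK j : Fin n → P) := by
    intro j
    rw [Module.Basis.map_apply]
    have : (snf.bN.prod bK) (Sum.inr j) = (0, bK j) := by
      simp [Module.Basis.prod_apply]
    rw [this]
    show s 0 + ((bK j : Fin n → P)) = (bK j : Fin n → P)
    simp
  let D : Matrix (Fin m) (Fin k ⊕ Fin l) P := LinearMap.toMatrix c snf.bM ψ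
  have hD1 : ∀ p i, D p (Sum.inl i) = if snf.f i = p then snf.a i else 0 := by
    intro p i
    rw [show D p (Sum.inl i) = (snf.bM.repr (ψ (c (Sum.inl i)))) p from
      LinearMap.toMatrix_apply c snf.bM ψ p (Sum.inl i)]
    rw [hc_inl, hs, snf.snf i, _root_.map_smul]
    rw [Module.Basis.repr_self]
    rw [Finsupp.smul_apply, Finsupp.single_apply, smul_eq_mul]
    split_ifs <;> simp
  have hD2 : ∀ p j, D p (Sum.inr j) = 0 := by
    intro p j
    rw [show D p (Sum.inr j) = (snf.bM.repr (ψ (c (Sum.inr j)))) p from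
      LinearMap.toMatrix_apply c snf.bM ψ p (Sum.inr j)]
    rw [hc_inr, (bK j).2]
    simp
  -- factorization over P
  have hBψ : LinearMap.toMatrix en em ψ = B := by
    funext p i
    rw [LinearMap.toMatrix_apply]
    show (em.repr (ψ (en i))) p = B p i
    rw [Pi.basisFun_repr]
    show (B *ᵥ (en i)) p = B p i
    rw [show en i = Pi.single i 1 from Pi.basisFun_apply P (Fin n) i, Matrix.mulVec_single]
    exact mul_one _
  have hfact : B = em.toMatrix snf.bM * D * c.toMatrix en := by
    rw [show em.toMatrix ⇑snf.bM * D = LinearMap.toMatrix c em ψ from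
      basis_toMatrix_mul_linearMap_toMatrix c em snf.bM ψ]
    rw [linearMap_toMatrix_mul_basis_toMatrix en c em ψ]
    exact hBψ.symm
  have hM1 : em.toMatrix ⇑snf.bM * snf.bM.toMatrix ⇑em = 1 :=
    Module.Basis.toMatrix_mul_toMatrix_flip em snf.bM
  have hM2 : snf.bM.toMatrix ⇑em * em.toMatrix ⇑snf.bM = 1 :=
    Module.Basis.toMatrix_mul_toMatrix_flip snf.bM em
  have hN1 : c.toMatrix ⇑en * en.toMatrix ⇑c = 1 :=
    Module.Basis.toMatrix_mul_toMatrix_flip c en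
  have hN2 : en.toMatrix ⇑c * c.toMatrix ⇑en = 1 :=
    Module.Basis.toMatrix_mul_toMatrix_flip en c
  -- push to the quotient
  have hAfact : A = (em.toMatrix ⇑snf.bM).map π * (D.map π) * ((c.toMatrix ⇑en).map π) := by
    rw [← hB, hfact, Matrix.map_mul, Matrix.map_mul]
  have honeM : (1 : Matrix (Fin m) (Fin m) P).map ⇑π = 1 :=
    Matrix.map_one _ (map_zero π) (map_one π)
  have honeK : (1 : Matrix (Fin k ⊕ Fin l) (Fin k ⊕ Fin l) P).map ⇑π = 1 :=
    Matrix.map_one _ (map_zero π) (map_one π)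
  have honeN : (1 : Matrix (Fin n) (Fin n) P).map ⇑π = 1 :=
    Matrix.map_one _ (map_zero π) (map_one π)
  obtain ⟨e1⟩ := col_iso_of_eq_mul A ((em.toMatrix ⇑snf.bM).map π) ((snf.bM.toMatrix ⇑em).map π)
    (D.map π) ((c.toMatrix ⇑en).map π) ((en.toMatrix ⇑c).map π) hAfact
    (by rw [← Matrix.map_mul, hM1, honeM]) (by rw [← Matrix.map_mul, hM2, honeM])
    (by rw [← Matrix.map_mul, hN1, honeK]) (by rw [← Matrix.map_mul, hN2, honeN])
  obtain ⟨e2⟩ := row_iso_of_eq_mul A ((em.toMatrix ⇑snf.bM).map π) ((snf.bM.toMatrix ⇑em).map π)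
    (D.map π) ((c.toMatrix ⇑en).map π) ((en.toMatrix ⇑c).map π) hAfact
    (by rw [← Matrix.map_mul, hM1, honeM]) (by rw [← Matrix.map_mul, hM2, honeM])
    (by rw [← Matrix.map_mul, hN1, honeK]) (by rw [← Matrix.map_mul, hN2, honeN])
  obtain ⟨e3⟩ := pseudoDiag_iso (fun i => snf.f i) snf.f.injective (fun i => π (snf.a i))
    (D.map π)
    (by intro p i; rw [Matrix.map_apply, hD1, apply_ite π, map_zero])
    (by intro p j; rw [Matrix.map_apply, hD2, map_zero])
  exact ⟨e2.symm.trans (e3.trans e1)⟩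
end

section
/- Let S be an idempotent semiring (a + a = a for all a), partially ordered by x ≤ y iff x + y = y, and let X, Y be left S-modules. A bijection φ : X → Y is an isomorphism of left S-modules if and only if both φ and φ^{-1} are left monotone, where φ is left monotone means: ax ≤ x' implies a(φx) ≤ φx' for all x, x' ∈ X and a ∈ S. -/
/-- Over an idempotent semiring `S` (ordered by `x ≤ y ↔ x + y = y`), a bijection between
left `S`-modules is an isomorphism of left `S`-modules (i.e. additive and `S`-equivariant)
iff it and its inverse are left monotone, where `φ` left monotone means
`a • x + x' = x'` implies `a • φ x + φ x' = φ x'`. -/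
theorem isomorphism_iff_monotone {S X Y : Type*} [Semiring S]
    [AddCommMonoid X] [Module S X] [AddCommMonoid Y] [Module S Y]
    (hS : ∀ a : S, a + a = a) (e : X ≃ Y) :
    ((∀ x x' : X, e (x + x') = e x + e x') ∧ (∀ (a : S) (x : X), e (a • x) = a • e x)) ↔
    ((∀ (a : S) (x x' : X), a • x + x' = x' → a • e x + e x' = e x') ∧
     (∀ (a : S) (y y' : Y), a • y + y' = y' → a • e.symm y + e.symm y' = e.symm y')) := by
  have idemX : ∀ x : X, x + x = x := fun x => by
    rw [← one_smul S x, ← add_smul, hS 1]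
  have idemY : ∀ y : Y, y + y = y := fun y => by
    rw [← one_smul S y, ← add_smul, hS 1]
  constructor
  · rintro ⟨hadd, hsmul⟩
    constructor
    · intro a x x' h
      rw [← hsmul, ← hadd, h]
    · intro a y y' h
      apply e.injective
      rw [hadd, hsmul, e.apply_symm_apply, e.apply_symm_apply, h]
  · rintro ⟨h1, h2⟩
    have hle : ∀ x x' : X, x + x' = x' → e x + e x' = e x' := fun x x' h => by
      have := h1 1 x x' (by rwa [one_smul]); rwa [one_smul] at this
    have hle' : ∀ y y' : Y, y + y' = y' → e.symm y + e.symm y' = e.symm y' := fun y y' h => by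
      have := h2 1 y y' (by rwa [one_smul]); rwa [one_smul] at this
    have antisym : ∀ y y' : Y, y + y' = y' → y' + y = y → y = y' := by
      intro y y' h h'
      rw [← h', add_comm, h]
    have hadd : ∀ x x' : X, e (x + x') = e x + e x' := by
      intro x x'
      apply antisym
      · -- e (x + x') ≤ e x + e x'
        set z := e.symm (e x + e x') with hz
        have hx : x + z = z := by
          have := hle' (e x) (e x + e x') (by rw [← add_assoc, idemY])
          rwa [e.symm_apply_apply] at this
        have hx' : x' + z = z := by
          have := hle' (e x') (e x + e x') (by rw [add_comm (e x), ← add_assoc, idemY])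
          rwa [e.symm_apply_apply] at this
        have hxx' : (x + x') + z = z := by rw [add_assoc, hx', hx]
        have := hle (x + x') z hxx'
        rwa [hz, e.apply_symm_apply] at this
      · -- e x + e x' ≤ e (x + x')
        have hx : e x + e (x + x') = e (x + x') := hle x (x + x') (by rw [← add_assoc, idemX])
        have hx' : e x' + e (x + x') = e (x + x') :=
          hle x' (x + x') (by rw [add_comm x, ← add_assoc, idemX])
        rw [add_assoc, hx', hx]
    refine ⟨hadd, fun a x => ?_⟩
    apply antisym
    · -- e (a • x) ≤ a • e x
      have h := h2 a (e x) (a • e x) (by rw [← add_smul, hS])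
      rw [e.symm_apply_apply] at h
      have := hle (a • x) (e.symm (a • e x)) h
      rwa [e.apply_symm_apply] at this
    · -- a • e x ≤ e (a • x)
      exact h1 a x (a • x) (by rw [← add_smul, hS])
end

section
/- Let S be an idempotent semiring with an involutive antitone map a ↦ ā (meaning: ā̄ = a, and ab ≤ c implies c̄a ≤ b̄ for all a,b,c ∈ S). Then for matrices A ∈ S^{m×n}, B ∈ S^{p×n}, M ∈ S^{p×m}, MA ≤ B implies B̄M ≤ Ā, where the bar on a matrix denotes entrywise bar composed with transpose, and ≤ is entrywise. -/
open Matrix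

/-- Conjugate transpose of a matrix with respect to an involution `conj` on `S`. -/
def conjT {S : Type*} [Semiring S] (conj : S → S) {m n : ℕ}
    (A : Matrix (Fin m) (Fin n) S) : Matrix (Fin n) (Fin m) S :=
  Matrix.of fun i j => conj (A j i)

private lemma sum_le_aux {S : Type*} [Semiring S] {ι : Type*} [DecidableEq ι] (s : Finset ι)
    (f : ι → S) (c : S) (hf : ∀ i ∈ s, f i + c = c) :
    (∑ i ∈ s, f i) + c = c := by
  induction s using Finset.induction_on with
  | empty => simp
  | @insert a t hx ih =>
    rw [Finset.sum_insert hx, add_assoc, ih (fun i hi => hf i (Finset.mem_insert_of_mem hi)),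
      hf a (Finset.mem_insert_self a t)]

/-- In an anti-involutive semiring (idempotent, with involutive `conj` satisfying
`ab ≤ c → c̄a ≤ b̄`, where `x ≤ y ↔ x + y = y`), for matrices:
`MA ≤ B` implies `B̄M ≤ Ā`. -/
theorem cycle_matrices {S : Type*} [Semiring S] (conj : S → S)
    (hid : ∀ a : S, a + a = a)
    (hinv : ∀ a : S, conj (conj a) = a)
    (hcyc : ∀ a b c : S, a * b + c = c → conj c * a + conj b = conj b)
    {m n p : ℕ} (A : Matrix (Fin m) (Fin n) S) (B : Matrix (Fin p) (Fin n) S)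
    (M : Matrix (Fin p) (Fin m) S)
    (h : M * A + B = B) :
    conjT conj B * M + conjT conj A = conjT conj A := by
  funext j i
  simp only [Matrix.add_apply, Matrix.mul_apply, conjT, Matrix.of_apply]
  apply sum_le_aux
  intro k _
  apply hcyc
  -- goal : M k i * A i j + B k j = B k j
  have hB : ∑ l, M k l * A l j + B k j = B k j := by
    have := congrFun (congrFun h k) j
    simpa [Matrix.add_apply, Matrix.mul_apply] using this
  -- M k i * A i j ≤ ∑ l, M k l * A l j
  have hterm : M k i * A i j + (∑ l, M k l * A l j) = ∑ l, M k l * A l j := by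
    have hmem : i ∈ (Finset.univ : Finset (Fin m)) := Finset.mem_univ i
    rw [← Finset.add_sum_erase _ _ hmem, ← add_assoc, hid]
  -- transitivity
  calc M k i * A i j + B k j
      = M k i * A i j + ((∑ l, M k l * A l j) + B k j) := by rw [hB]
    _ = (M k i * A i j + ∑ l, M k l * A l j) + B k j := by rw [add_assoc]
    _ = (∑ l, M k l * A l j) + B k j := by rw [hterm]
    _ = B k j := hB
end

section
/- Let S be an anti-involutive semiring. Then for every matrix A ∈ S^{m×n}, the maps φ : row(A) → col(A), x ↦ A x̄, and ψ : col(A) → row(A), y ↦ ȳ A, are mutually inverse order-reversing bijections; in particular ψ(φ(uA)) = uA for all u and φ(ψ(Av)) = Av for all v. -/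
open Matrix

/-- Entrywise right scalar action on matrices. -/
def smulR {S : Type*} [Semiring S] {m n : ℕ} (A : Matrix (Fin m) (Fin n) S) (a : S) :
    Matrix (Fin m) (Fin n) S :=
  Matrix.of fun i j => A i j * a

section Aux

variable {S : Type*} [Semiring S]

lemma hle_trans {a b c : S} (h1 : a + b = b) (h2 : b + c = c) : a + c = c := by
  rw [← h2, ← add_assoc, h1]

lemma sum_le {ι : Type*} (hid : ∀ a : S, a + a = a) (s : Finset ι) (f : ι → S) (c : S)
    (h : ∀ i ∈ s, f i + c = c) : (∑ i ∈ s, f i) + c = c := by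
  classical
  induction s using Finset.induction_on with
  | empty => simp
  | @insert a s hx ih =>
    rw [Finset.sum_insert hx, add_assoc, ih (fun i hi => h i (Finset.mem_insert_of_mem hi)),
      h a (Finset.mem_insert_self a s)]

lemma sum_le_sum {ι : Type*} (s : Finset ι) (f g : ι → S)
    (h : ∀ i ∈ s, f i + g i = g i) : (∑ i ∈ s, f i) + ∑ i ∈ s, g i = ∑ i ∈ s, g i := by
  rw [← Finset.sum_add_distrib]
  exact Finset.sum_congr rfl h

lemma term_le_sum {ι : Type*} [DecidableEq ι] (hid : ∀ a : S, a + a = a) {s : Finset ι}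
    (f : ι → S) {i : ι} (h : i ∈ s) : f i + ∑ j ∈ s, f j = ∑ j ∈ s, f j := by
  rw [← Finset.add_sum_erase s f h, ← add_assoc, hid]

lemma cyc2 (conj : S → S) (hinv : ∀ a : S, conj (conj a) = a)
    (hcyc : ∀ a b c : S, a * b + c = c → conj c * a + conj b = conj b)
    (p q r : S) (h : p * q + r = r) : q * conj r + conj p = conj p := by
  have h2 := hcyc (conj r) p (conj q) (hcyc p q r h)
  rwa [hinv] at h2

lemma mrefl (hid : ∀ a : S, a + a = a) {k l : ℕ} (M : Matrix (Fin k) (Fin l) S) :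
    M + M = M := by
  ext i j
  exact hid _

lemma manti {k l : ℕ} {M N : Matrix (Fin k) (Fin l) S}
    (h1 : M + N = N) (h2 : N + M = M) : M = N := by
  calc M = N + M := h2.symm
    _ = M + N := add_comm _ _
    _ = N := h1

lemma mul_le_rightM {k l r : ℕ} {M N : Matrix (Fin k) (Fin l) S}
    (h : M + N = N) (C : Matrix (Fin l) (Fin r) S) : M * C + N * C = N * C := by
  rw [← Matrix.add_mul, h]

lemma mul_le_leftM {k l r : ℕ} {M N : Matrix (Fin l) (Fin r) S}
    (h : M + N = N) (C : Matrix (Fin k) (Fin l) S) : C * M + C * N = C * N := by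
  rw [← Matrix.mul_add, h]

lemma conjT_conjT (conj : S → S) (hinv : ∀ a : S, conj (conj a) = a)
    {k l : ℕ} (M : Matrix (Fin k) (Fin l) S) : conjT conj (conjT conj M) = M := by
  ext i j
  simp [conjT, hinv]

lemma conjT_anti (conj : S → S)
    (hcyc : ∀ a b c : S, a * b + c = c → conj c * a + conj b = conj b)
    {k l : ℕ} {M N : Matrix (Fin k) (Fin l) S} (h : M + N = N) :
    conjT conj N + conjT conj M = conjT conj M := by
  ext i j
  have hh : M j i + N j i = N j i := by
    have := congrArg (fun X : Matrix (Fin k) (Fin l) S => X j i) h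
    simpa using this
  have h1 : (1 : S) * M j i + N j i = N j i := by simpa using hh
  simpa [conjT] using hcyc 1 (M j i) (N j i) h1

lemma cycleM (conj : S → S) (hid : ∀ a : S, a + a = a)
    (hcyc : ∀ a b c : S, a * b + c = c → conj c * a + conj b = conj b)
    {p q r : ℕ} {M : Matrix (Fin p) (Fin q) S} {N : Matrix (Fin q) (Fin r) S}
    {P : Matrix (Fin p) (Fin r) S} (h : M * N + P = P) :
    conjT conj P * M + conjT conj N = conjT conj N := by
  ext j t
  simp only [Matrix.add_apply, Matrix.mul_apply, conjT, Matrix.of_apply]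
  apply sum_le hid
  intro i _
  have h1 : (∑ k, M i k * N k j) + P i j = P i j := by
    have := congrArg (fun X : Matrix (Fin p) (Fin r) S => X i j) h
    simpa [Matrix.mul_apply] using this
  have h2 : M i t * N t j + ∑ k, M i k * N k j = ∑ k, M i k * N k j :=
    term_le_sum hid (f := fun k => M i k * N k j) (Finset.mem_univ t)
  exact hcyc _ _ _ (hle_trans h2 h1)

end Aux

/-- Over an anti-involutive semiring, the maps `φ : row(A) → col(A)`, `x ↦ A x̄` and
`ψ : col(A) → row(A)`, `y ↦ ȳ A` are mutually inverse antitone (order-reversing)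
bijections between the row space and the column space of `A`. -/
theorem rowSpace_colSpace_anti_isomorphic {S : Type*} [Semiring S] (conj : S → S)
    (hid : ∀ a : S, a + a = a)
    (hinv : ∀ a : S, conj (conj a) = a)
    (hcyc : ∀ a b c : S, a * b + c = c → conj c * a + conj b = conj b)
    {m n : ℕ} (A : Matrix (Fin m) (Fin n) S) :
    (∀ u : Matrix (Fin 1) (Fin m) S,
      conjT conj (A * conjT conj (u * A)) * A = u * A) ∧
    (∀ v : Matrix (Fin n) (Fin 1) S,
      A * conjT conj (conjT conj (A * v) * A) = A * v) ∧
    (∀ (a : S) (u u' : Matrix (Fin 1) (Fin m) S),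
      a • (u * A) + u' * A = u' * A →
      smulR (A * conjT conj (u' * A)) a + A * conjT conj (u * A) = A * conjT conj (u * A)) ∧
    (∀ (a : S) (v v' : Matrix (Fin n) (Fin 1) S),
      smulR (A * v) a + A * v' = A * v' →
      a • (conjT conj (A * v') * A) + conjT conj (A * v) * A = conjT conj (A * v) * A) := by
  refine ⟨?_, ?_, ?_, ?_⟩
  · -- ψ (φ (u A)) = u A
    intro u
    -- direction: u A ≤ conjT y * A
    have s1 := cycleM conj hid hcyc (mrefl hid (u * A))
    have s2 := cycleM conj hid hcyc s1
    rw [conjT_conjT conj hinv] at s2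
    -- s2 : A * conjT conj (u * A) + conjT conj u = conjT conj u
    have s3 := conjT_anti conj hcyc s2
    rw [conjT_conjT conj hinv] at s3
    -- s3 : u + conjT conj (A * conjT conj (u * A)) = conjT conj (A * conjT conj (u * A))
    have s4 := mul_le_rightM s3 A
    -- direction: conjT y * A ≤ u A
    have t2 := cycleM conj hid hcyc (mrefl hid (A * conjT conj (u * A)))
    rw [conjT_conjT conj hinv] at t2
    exact manti t2 s4
  · -- φ (ψ (A v)) = A v
    intro v
    have s1 := cycleM conj hid hcyc (mrefl hid (A * v))
    -- s1 : conjT (A*v) * A + conjT v = conjT v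
    have s2 := conjT_anti conj hcyc s1
    rw [conjT_conjT conj hinv] at s2
    have s3 := mul_le_leftM s2 A
    -- other direction
    have t1 := cycleM conj hid hcyc (mrefl hid (conjT conj (A * v) * A))
    have t2 := cycleM conj hid hcyc t1
    rw [conjT_conjT conj hinv, conjT_conjT conj hinv] at t2
    exact manti t2 s3
  · -- antitone φ
    intro a u u' H
    ext i k
    simp only [smulR, conjT, Matrix.of_apply, Matrix.add_apply, Matrix.mul_apply]
    rw [Finset.sum_mul]
    apply sum_le_sum
    intro j _
    have hj : a * (u * A) k j + (u' * A) k j = (u' * A) k j := by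
      have := congrArg (fun X : Matrix (Fin 1) (Fin n) S => X k j) H
      simpa using this
    have h1 := hcyc a ((u * A) k j) ((u' * A) k j) hj
    simp only [Matrix.mul_apply] at h1
    rw [mul_assoc, ← mul_add, h1]
  · -- antitone ψ
    intro a v v' H
    ext k j
    simp only [smulR, conjT, Matrix.of_apply, Matrix.add_apply, Matrix.mul_apply,
      Matrix.smul_apply, smul_eq_mul]
    rw [Finset.mul_sum]
    apply sum_le_sum
    intro i _
    have hi : (A * v) i k * a + (A * v') i k = (A * v') i k := by
      have := congrArg (fun X : Matrix (Fin m) (Fin 1) S => X i k) H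
      simpa [smulR] using this
    have h1 := cyc2 conj hinv hcyc ((A * v) i k) a ((A * v') i k) hi
    simp only [Matrix.mul_apply] at h1
    rw [← mul_assoc, ← add_mul, h1]
end

section
/- Let S be an exact semiring and let A ∈ S^{m×n}, B ∈ S^{p×q} be matrices. If there exists an isomorphism of right S-modules col(A) ≅ col(B), then there exist matrices M ∈ S^{p×m} and P ∈ S^{m×p} with PMA = A and col(MA) = col(B); consequently A and B are D-related: A L (MA) R B. -/
open Matrix

/-- Over an exact semiring (exactness in the form (G1): every right linear function
`col(A) → S` is `Av ↦ uAv` for some `u`), if `col(A) ≅ col(B)` as right `S`-modules then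
there are matrices `M`, `P` with `PMA = A` and `col(MA) = col(B)`; consequently
`A L (MA) R B`, so `A D B`. -/
theorem D_related_of_colSpace_iso {S : Type*} [Semiring S] {m n p q : ℕ}
    (hexact : ∀ (m' n' : ℕ) (A' : Matrix (Fin m') (Fin n') S)
      (φ : {y : Fin m' → S // y ∈ colSpace A'} → S), RightLin A' φ →
      ∃ u : Fin m' → S, ∀ v : Fin n' → S,
        φ ⟨Matrix.mulVec A' v, ⟨v, rfl⟩⟩ = dotProduct u (Matrix.mulVec A' v))
    (A : Matrix (Fin m) (Fin n) S) (B : Matrix (Fin p) (Fin q) S)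
    (e : {y : Fin m → S // y ∈ colSpace A} ≃ {y : Fin p → S // y ∈ colSpace B})
    (hadd : ∀ (y y' : Fin m → S) (hy : y ∈ colSpace A) (hy' : y' ∈ colSpace A)
      (h : y + y' ∈ colSpace A),
      (e ⟨y + y', h⟩ : Fin p → S) = (e ⟨y, hy⟩ : Fin p → S) + (e ⟨y', hy'⟩ : Fin p → S))
    (hsmul : ∀ (y : Fin m → S) (hy : y ∈ colSpace A) (a : S)
      (h : (fun i => y i * a) ∈ colSpace A),
      (e ⟨fun i => y i * a, h⟩ : Fin p → S) = fun i => (e ⟨y, hy⟩ : Fin p → S) i * a) :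
    ∃ (M : Matrix (Fin p) (Fin m) S) (P : Matrix (Fin m) (Fin p) S),
      P * (M * A) = A ∧ colSpace (M * A) = colSpace B := by
  classical
  -- colSpace closure
  have closA_add : ∀ y y' : Fin m → S, y ∈ colSpace A → y' ∈ colSpace A →
      y + y' ∈ colSpace A := by
    rintro y y' ⟨v, rfl⟩ ⟨v', rfl⟩
    exact ⟨v + v', (A.mulVec_add v v').symm⟩
  have closA_smul : ∀ y : Fin m → S, y ∈ colSpace A → ∀ a : S,
      (fun i => y i * a) ∈ colSpace A := by
    rintro y ⟨v, rfl⟩ a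
    refine ⟨fun j => v j * a, funext fun i => ?_⟩
    simp [Matrix.mulVec, dotProduct, Finset.sum_mul, mul_assoc]
  -- additivity and homogeneity of e.symm
  have hadd' : ∀ (z z' : Fin p → S) (hz : z ∈ colSpace B) (hz' : z' ∈ colSpace B)
      (h : z + z' ∈ colSpace B),
      (e.symm ⟨z + z', h⟩ : Fin m → S)
        = (e.symm ⟨z, hz⟩ : Fin m → S) + (e.symm ⟨z', hz'⟩ : Fin m → S) := by
    intro z z' hz hz' h
    set y := e.symm ⟨z, hz⟩ with hy
    set y' := e.symm ⟨z', hz'⟩ with hy'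
    have hmem : (y : Fin m → S) + (y' : Fin m → S) ∈ colSpace A :=
      closA_add _ _ y.2 y'.2
    have : e ⟨(y : Fin m → S) + (y' : Fin m → S), hmem⟩ = ⟨z + z', h⟩ := by
      apply Subtype.ext
      have := hadd (y : Fin m → S) (y' : Fin m → S) y.2 y'.2 hmem
      rw [this]
      have h1 : e ⟨(y : Fin m → S), y.2⟩ = ⟨z, hz⟩ := by
        rw [hy]; simp
      have h2 : e ⟨(y' : Fin m → S), y'.2⟩ = ⟨z', hz'⟩ := by
        rw [hy']; simp
      rw [h1, h2]
    have := congrArg e.symm this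
    rw [Equiv.symm_apply_apply] at this
    rw [← this]
  have hsmul' : ∀ (z : Fin p → S) (hz : z ∈ colSpace B) (a : S)
      (h : (fun j => z j * a) ∈ colSpace B),
      (e.symm ⟨fun j => z j * a, h⟩ : Fin m → S)
        = fun i => (e.symm ⟨z, hz⟩ : Fin m → S) i * a := by
    intro z hz a h
    set y := e.symm ⟨z, hz⟩ with hy
    have hmem : (fun i => (y : Fin m → S) i * a) ∈ colSpace A := closA_smul _ y.2 a
    have : e ⟨fun i => (y : Fin m → S) i * a, hmem⟩ = ⟨fun j => z j * a, h⟩ := by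
      apply Subtype.ext
      have := hsmul (y : Fin m → S) y.2 a hmem
      rw [this]
      have h1 : e ⟨(y : Fin m → S), y.2⟩ = ⟨z, hz⟩ := by rw [hy]; simp
      rw [h1]
    have := congrArg e.symm this
    rw [Equiv.symm_apply_apply] at this
    rw [← this]
  -- build M from exactness, row by row
  have hM : ∀ i : Fin p, ∃ u : Fin m → S, ∀ v : Fin n → S,
      (e ⟨Matrix.mulVec A v, ⟨v, rfl⟩⟩ : Fin p → S) i
        = dotProduct u (Matrix.mulVec A v) := by
    intro i
    refine hexact m n A (fun y => (e y : Fin p → S) i) ⟨?_, ?_⟩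
    · intro y y' hy hy' h
      have := hadd y y' hy hy' h
      exact congrFun this i
    · intro y hy a h
      have := hsmul y hy a h
      exact congrFun this i
  choose M hMspec using hM
  have hP : ∀ j : Fin m, ∃ u : Fin p → S, ∀ w : Fin q → S,
      (e.symm ⟨Matrix.mulVec B w, ⟨w, rfl⟩⟩ : Fin m → S) j
        = dotProduct u (Matrix.mulVec B w) := by
    intro j
    refine hexact p q B (fun z => (e.symm z : Fin m → S) j) ⟨?_, ?_⟩
    · intro z z' hz hz' h
      exact congrFun (hadd' z z' hz hz' h) j
    · intro z hz a h
      exact congrFun (hsmul' z hz a h) j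
  choose P hPspec using hP
  -- key identities
  have keyM : ∀ v : Fin n → S,
      (e ⟨Matrix.mulVec A v, ⟨v, rfl⟩⟩ : Fin p → S)
        = Matrix.mulVec (Matrix.of M * A) v := by
    intro v
    funext i
    rw [hMspec i v]
    rw [← Matrix.mulVec_mulVec]
    rfl
  have keyP : ∀ w : Fin q → S,
      (e.symm ⟨Matrix.mulVec B w, ⟨w, rfl⟩⟩ : Fin m → S)
        = Matrix.mulVec (Matrix.of P) (Matrix.mulVec B w) := by
    intro w
    funext j
    exact hPspec j w
  have keyPMA : ∀ v : Fin n → S,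
      Matrix.mulVec (Matrix.of P * (Matrix.of M * A)) v = Matrix.mulVec A v := by
    intro v
    have hmem : Matrix.mulVec (Matrix.of M * A) v ∈ colSpace B := by
      rw [← keyM v]; exact (e ⟨Matrix.mulVec A v, ⟨v, rfl⟩⟩).2
    obtain ⟨w, hw⟩ := hmem
    rw [← Matrix.mulVec_mulVec, hw, ← keyP w]
    have : (⟨Matrix.mulVec B w, ⟨w, rfl⟩⟩ : {y : Fin p → S // y ∈ colSpace B})
        = e ⟨Matrix.mulVec A v, ⟨v, rfl⟩⟩ := by
      apply Subtype.ext
      rw [keyM v, hw]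
    rw [this, Equiv.symm_apply_apply]
  refine ⟨Matrix.of M, Matrix.of P, ?_, ?_⟩
  · -- P * (M * A) = A
    ext i j
    have := congrFun (keyPMA (Pi.single j 1)) i
    simpa [Matrix.mulVec, dotProduct, Pi.single_apply] using this
  · -- colSpace equality
    ext y
    constructor
    · rintro ⟨v, rfl⟩
      rw [← keyM v]
      exact (e ⟨Matrix.mulVec A v, ⟨v, rfl⟩⟩).2
    · rintro ⟨w, rfl⟩
      obtain ⟨v, hv⟩ := (e.symm ⟨Matrix.mulVec B w, ⟨w, rfl⟩⟩).2
      refine ⟨v, ?_⟩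
      rw [← keyM v]
      have : (⟨Matrix.mulVec A v, ⟨v, rfl⟩⟩ : {y : Fin m → S // y ∈ colSpace A})
          = e.symm ⟨Matrix.mulVec B w, ⟨w, rfl⟩⟩ := by
        apply Subtype.ext; exact hv.symm
      rw [this, Equiv.apply_symm_apply]
end

section
/- Let S be a semiring and let A ∈ S^{m×n}, B ∈ S^{p×q}. If A D B (i.e., there exists C ∈ S^{p×n} with row(A) = row(C) and col(C) = col(B)), then col(A) and col(B) are isomorphic as right S-modules and row(A) and row(B) are isomorphic as left S-modules. -/
open Matrix

lemma row_mem_rowSpace {S : Type*} [Semiring S] {m n : ℕ} (A : Matrix (Fin m) (Fin n) S)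
    (i : Fin m) : A i ∈ rowSpace A :=
  ⟨Pi.single i 1, by rw [Matrix.single_one_vecMul]; rfl⟩

lemma col_mem_colSpace {S : Type*} [Semiring S] {m n : ℕ} (A : Matrix (Fin m) (Fin n) S)
    (j : Fin n) : (fun i => A i j) ∈ colSpace A :=
  ⟨Pi.single j 1, by ext i; simp [Matrix.mulVec_single]⟩

lemma mulVec_mul_right {S : Type*} [Semiring S] {m n : ℕ} (M : Matrix (Fin m) (Fin n) S)
    (y : Fin n → S) (a : S) :
    Matrix.mulVec M (fun i => y i * a) = fun i => Matrix.mulVec M y i * a := by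
  ext i
  simp [Matrix.mulVec, dotProduct, Finset.sum_mul, mul_assoc]

/-- If `A D B` (there is `C` with `row(A) = row(C)` and `col(C) = col(B)`), then
`col(A) ≅ col(B)` as right `S`-modules and `row(A) ≅ row(B)` as left `S`-modules. -/
theorem iso_of_D_related {S : Type*} [Semiring S] {m n p q : ℕ}
    (A : Matrix (Fin m) (Fin n) S) (B : Matrix (Fin p) (Fin q) S)
    (C : Matrix (Fin p) (Fin n) S)
    (hL : rowSpace A = rowSpace C) (hR : colSpace C = colSpace B) :
    (∃ e : {y : Fin m → S // y ∈ colSpace A} ≃ {y : Fin p → S // y ∈ colSpace B},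
      (∀ (y y' : Fin m → S) (hy : y ∈ colSpace A) (hy' : y' ∈ colSpace A)
        (h : y + y' ∈ colSpace A),
        (e ⟨y + y', h⟩ : Fin p → S) = (e ⟨y, hy⟩ : Fin p → S) + (e ⟨y', hy'⟩ : Fin p → S)) ∧
      (∀ (y : Fin m → S) (hy : y ∈ colSpace A) (a : S)
        (h : (fun i => y i * a) ∈ colSpace A),
        (e ⟨fun i => y i * a, h⟩ : Fin p → S) = fun i => (e ⟨y, hy⟩ : Fin p → S) i * a)) ∧
    (∃ f : {x : Fin n → S // x ∈ rowSpace A} ≃ {x : Fin q → S // x ∈ rowSpace B},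
      (∀ (x x' : Fin n → S) (hx : x ∈ rowSpace A) (hx' : x' ∈ rowSpace A)
        (h : x + x' ∈ rowSpace A),
        (f ⟨x + x', h⟩ : Fin q → S) = (f ⟨x, hx⟩ : Fin q → S) + (f ⟨x', hx'⟩ : Fin q → S)) ∧
      (∀ (x : Fin n → S) (hx : x ∈ rowSpace A) (a : S)
        (h : a • x ∈ rowSpace A),
        (f ⟨a • x, h⟩ : Fin q → S) = a • (f ⟨x, hx⟩ : Fin q → S))) := by
  classical
  -- obtain M with C = M * A
  have hM : ∃ M : Matrix (Fin p) (Fin m) S, C = M * A := by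
    have h : ∀ k, ∃ u : Fin m → S, C k = Matrix.vecMul u A := by
      intro k
      have : C k ∈ rowSpace A := hL ▸ row_mem_rowSpace C k
      exact this
    choose u hu using h
    refine ⟨Matrix.of u, ?_⟩
    ext k j
    rw [hu k]
    rfl
  -- obtain P with A = P * C
  have hP : ∃ P : Matrix (Fin m) (Fin p) S, A = P * C := by
    have h : ∀ k, ∃ u : Fin p → S, A k = Matrix.vecMul u C := by
      intro k
      have : A k ∈ rowSpace C := hL ▸ row_mem_rowSpace A k
      exact this
    choose u hu using h
    refine ⟨Matrix.of u, ?_⟩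
    ext k j
    rw [hu k]
    rfl
  -- obtain N with B = C * N
  have hN : ∃ N : Matrix (Fin n) (Fin q) S, B = C * N := by
    have h : ∀ j, ∃ v : Fin n → S, (fun i => B i j) = Matrix.mulVec C v := by
      intro j
      have : (fun i => B i j) ∈ colSpace C := hR ▸ col_mem_colSpace B j
      exact this
    choose v hv using h
    refine ⟨Matrix.of (fun i j => v j i), ?_⟩
    ext k j
    have := congrFun (hv j) k
    simpa [Matrix.mulVec, dotProduct, Matrix.mul_apply] using this
  -- obtain Q with C = B * Q
  have hQ : ∃ Q : Matrix (Fin q) (Fin n) S, C = B * Q := by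
    have h : ∀ j, ∃ v : Fin q → S, (fun i => C i j) = Matrix.mulVec B v := by
      intro j
      have : (fun i => C i j) ∈ colSpace B := hR ▸ col_mem_colSpace C j
      exact this
    choose v hv using h
    refine ⟨Matrix.of (fun i j => v j i), ?_⟩
    ext k j
    have := congrFun (hv j) k
    simpa [Matrix.mulVec, dotProduct, Matrix.mul_apply] using this
  obtain ⟨M, hMA⟩ := hM
  obtain ⟨P, hPC⟩ := hP
  obtain ⟨N, hCN⟩ := hN
  obtain ⟨Q, hBQ⟩ := hQ
  constructor
  · -- column space isomorphism
    have fwd : ∀ y ∈ colSpace A, Matrix.mulVec M y ∈ colSpace B := by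
      rintro y ⟨v, rfl⟩
      rw [← hR]
      exact ⟨v, by rw [Matrix.mulVec_mulVec, ← hMA]⟩
    have bwd : ∀ z ∈ colSpace B, Matrix.mulVec P z ∈ colSpace A := by
      rintro z hz
      rw [← hR] at hz
      obtain ⟨v, rfl⟩ := hz
      exact ⟨v, by rw [Matrix.mulVec_mulVec, ← hPC]⟩
    have li : ∀ y ∈ colSpace A, Matrix.mulVec P (Matrix.mulVec M y) = y := by
      rintro y ⟨v, rfl⟩
      rw [Matrix.mulVec_mulVec, Matrix.mulVec_mulVec, Matrix.mul_assoc, ← hMA, ← hPC]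
    have ri : ∀ z ∈ colSpace B, Matrix.mulVec M (Matrix.mulVec P z) = z := by
      rintro z hz
      rw [← hR] at hz
      obtain ⟨v, rfl⟩ := hz
      rw [Matrix.mulVec_mulVec, Matrix.mulVec_mulVec, Matrix.mul_assoc, ← hPC, ← hMA]
    refine ⟨⟨fun y => ⟨Matrix.mulVec M y.1, fwd y.1 y.2⟩,
            fun z => ⟨Matrix.mulVec P z.1, bwd z.1 z.2⟩,
            fun y => Subtype.ext (li y.1 y.2),
            fun z => Subtype.ext (ri z.1 z.2)⟩, ?_, ?_⟩
    · intro y y' hy hy' h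
      exact Matrix.mulVec_add M y y'
    · intro y hy a h
      exact mulVec_mul_right M y a
  · -- row space isomorphism
    have fwd : ∀ x ∈ rowSpace A, Matrix.vecMul x N ∈ rowSpace B := by
      intro x hx
      rw [hL] at hx
      obtain ⟨u, rfl⟩ := hx
      exact ⟨u, by rw [Matrix.vecMul_vecMul, ← hCN]⟩
    have bwd : ∀ z ∈ rowSpace B, Matrix.vecMul z Q ∈ rowSpace A := by
      rintro z ⟨w, rfl⟩
      rw [hL]
      exact ⟨w, by rw [Matrix.vecMul_vecMul, ← hBQ]⟩
    have li : ∀ x ∈ rowSpace A, Matrix.vecMul (Matrix.vecMul x N) Q = x := by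
      intro x hx
      rw [hL] at hx
      obtain ⟨u, rfl⟩ := hx
      rw [Matrix.vecMul_vecMul, Matrix.vecMul_vecMul, ← Matrix.mul_assoc, ← hCN, ← hBQ]
    have ri : ∀ z ∈ rowSpace B, Matrix.vecMul (Matrix.vecMul z Q) N = z := by
      rintro z ⟨w, rfl⟩
      rw [Matrix.vecMul_vecMul, Matrix.vecMul_vecMul, ← Matrix.mul_assoc, ← hBQ, ← hCN]
    refine ⟨⟨fun x => ⟨Matrix.vecMul x.1 N, fwd x.1 x.2⟩,
            fun z => ⟨Matrix.vecMul z.1 Q, bwd z.1 z.2⟩,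
            fun x => Subtype.ext (li x.1 x.2),
            fun z => Subtype.ext (ri z.1 z.2)⟩, ?_, ?_⟩
    · intro x x' hx hx' h
      exact Matrix.add_vecMul N x x'
    · intro x hx a h
      exact Matrix.smul_vecMul a x N
end
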